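/- arXiv:2411.00466 — 9 statements merged into one kernel-verified Lean document; each statement's English description precedes it below -/
import Mathlib

section
/- With X = {1,…,r} and K = {r+1,…,r+k}, two 3-nilpotent semigroups N(X,K,m) and N(X,K,m′) are isomorphic if and only if there is a permutation π of X such that the induced partial partition P_m of X × X is mapped to P_{m′} by the action (x,y) ↦ (xπ, yπ). Equivalently, isomorphism classes of 3-nilpotent semigroups of rank r with |K| = k correspond bijectively to orbits of the symmetric group S_r acting on the set of partial partitions of X × X into k blocks. -/
/-!
An isomorphism `N(X,K,m) ≅ N(X,K,m')` fixes `0`, the only idempotent. Since every label in `K`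
is a product of two generators while no product is a generator, it maps `K` into `K`, hence
(by finiteness) onto `K` and `X` onto `X`: it is `0 ↦ 0` together with permutations `π` of `X`
and `σ` of `K`, and multiplicativity on pairs of generators says exactly
`m'(xπ, yπ) = (m(x,y))σ`. Conversely such a pair of permutations defines an isomorphism.
-/

/-- The multiplication of `N(X, K, m)` on `Option (X ⊕ K)`, `none` being `0`. -/
def nmul {X K : Type*} (m : X → X → Option K) :
    Option (X ⊕ K) → Option (X ⊕ K) → Option (X ⊕ K)
  | some (Sum.inl x), some (Sum.inl y) => (m x y).map Sum.inr
  | _, _ => none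

namespace Equiv

theorem optionCongr_removeNone {α β : Type*} (e : Option α ≃ Option β) (h : e none = none) :
    optionCongr (removeNone e) = e := by
  ext1 (_ | x)
  · exact h.symm
  · refine removeNone_some e (Option.ne_none_iff_exists'.mp fun hx => ?_)
    exact Option.some_ne_none x (e.injective (hx.trans h.symm))

theorem Perm.exists_optionCongr_sumCongr_eq {X K : Type*} [Finite X] [Finite K]
    (e : Perm (Option (X ⊕ K))) (h0 : e none = none)
    (hK : ∀ j, ∃ j', e (some (Sum.inr j)) = some (Sum.inr j')) :
    ∃ (π : Perm X) (σ : Perm K), optionCongr (sumCongr π σ) = e := by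
  have hmaps : Set.MapsTo (removeNone e) (Set.range Sum.inr) (Set.range Sum.inr) := by
    rintro _ ⟨j, rfl⟩
    obtain ⟨j', hj'⟩ := hK j
    refine ⟨j', Option.some_injective _ ?_⟩
    rw [removeNone_some e ⟨_, hj'⟩, hj']
  obtain ⟨⟨π, σ⟩, hπσ⟩ :=
    mem_sumCongrHom_range_of_perm_mapsTo_inl ((perm_mapsTo_inl_iff_mapsTo_inr _).mpr hmaps)
  exact ⟨π, σ, by rw [← optionCongr_removeNone e h0, ← hπσ]; rfl⟩

end Equiv

section

variable {X K X' K' : Type*} {m : X → X → Option K} {m' : X' → X' → Option K'}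

@[simp]
theorem nmul_some_inl (m : X → X → Option K) (x y : X) :
    nmul m (some (.inl x)) (some (.inl y)) = (m x y).map .inr :=
  rfl

theorem nmul_ne_some_inl (m : X → X → Option K) (a b : Option (X ⊕ K)) (x : X) :
    nmul m a b ≠ some (.inl x) := by
  rcases a with _ | (_ | _) <;> rcases b with _ | (_ | _) <;> simp [nmul]

theorem nmul_self_eq_self_iff (m : X → X → Option K) (a : Option (X ⊕ K)) :
    nmul m a a = a ↔ a = none := by
  rcases a with _ | (_ | _) <;> simp [nmul]

theorem map_none_of_map_nmul {e : Option (X ⊕ K) ≃ Option (X' ⊕ K')}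
    (he : ∀ a b, e (nmul m a b) = nmul m' (e a) (e b)) : e none = none :=
  (nmul_self_eq_self_iff m' _).mp (he none none).symm

theorem exists_map_some_inr_of_map_nmul (hm : ∀ j : K, ∃ x y, m x y = some j)
    {e : Option (X ⊕ K) ≃ Option (X' ⊕ K')}
    (he : ∀ a b, e (nmul m a b) = nmul m' (e a) (e b)) (j : K) :
    ∃ j', e (some (.inr j)) = some (.inr j') := by
  obtain ⟨x, y, hxy⟩ := hm j
  have hprod := he (some (.inl x)) (some (.inl y))
  rw [nmul_some_inl, hxy, Option.map_some] at hprod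
  rcases hej : e (some (.inr j)) with _ | (x' | j')
  · rw [← map_none_of_map_nmul he] at hej
    exact absurd (e.injective hej) (Option.some_ne_none _)
  · exact absurd (hej ▸ hprod).symm (nmul_ne_some_inl m' _ _ x')
  · exact ⟨j', rfl⟩

theorem optionCongr_sumCongr_map_nmul_iff (π : X ≃ X') (σ : K ≃ K') :
    (∀ a b, Equiv.optionCongr (π.sumCongr σ) (nmul m a b) =
        nmul m' (Equiv.optionCongr (π.sumCongr σ) a) (Equiv.optionCongr (π.sumCongr σ) b)) ↔
      ∀ x y, m' (π x) (π y) = (m x y).map σ := by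
  have hmap : ∀ x y, Equiv.optionCongr (π.sumCongr σ) (nmul m (some (.inl x)) (some (.inl y))) =
      ((m x y).map σ).map .inr := by
    intro x y
    simp [Option.map_map, Function.comp_def]
  constructor
  · intro h x y
    have hxy := h (some (.inl x)) (some (.inl y))
    rw [hmap] at hxy
    simpa using (Option.map_injective Sum.inr_injective hxy).symm
  · intro h a b
    rcases a with _ | (x | _) <;> rcases b with _ | (y | _) <;> try rfl
    rw [hmap]
    simp [h]

end

theorem stmt4_general (r k : ℕ) (m m' : Fin r → Fin r → Option (Fin k))
    (hm : ∀ j : Fin k, ∃ x y, m x y = some j) :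
    (∃ e : Option (Fin r ⊕ Fin k) ≃ Option (Fin r ⊕ Fin k),
        ∀ a b, e (nmul m a b) = nmul m' (e a) (e b)) ↔
      ∃ π : Equiv.Perm (Fin r), ∃ σ : Equiv.Perm (Fin k),
        ∀ x y, m' (π x) (π y) = (m x y).map σ := by
  constructor
  · rintro ⟨e, he⟩
    obtain ⟨π, σ, rfl⟩ := Equiv.Perm.exists_optionCongr_sumCongr_eq e
      (map_none_of_map_nmul he) (exists_map_some_inr_of_map_nmul hm he)
    exact ⟨π, σ, (optionCongr_sumCongr_map_nmul_iff π σ).mp he⟩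
  · rintro ⟨π, σ, h⟩
    exact ⟨_, (optionCongr_sumCongr_map_nmul_iff π σ).mpr h⟩

/-- `N(X,K,m) ≅ N(X,K,m')` iff some permutation `π` of `X` carries the kernel
partial partition of `m` to that of `m'` under the coordinatewise action;
equivalently, there are permutations `π` of `X` and `σ` of the labels `K`
with `m'(xπ, yπ) = (m(x,y))σ`. -/
theorem stmt4 (r k : ℕ) (m m' : Fin r → Fin r → Option (Fin k))
    (hm : ∀ j : Fin k, ∃ x y, m x y = some j)
    (hm' : ∀ j : Fin k, ∃ x y, m' x y = some j) :
    (∃ e : Option (Fin r ⊕ Fin k) ≃ Option (Fin r ⊕ Fin k),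
        ∀ a b, e (nmul m a b) = nmul m' (e a) (e b)) ↔
      ∃ π : Equiv.Perm (Fin r), ∃ σ : Equiv.Perm (Fin k),
        ∀ x y, m' (π x) (π y) = (m x y).map σ :=
  stmt4_general r k m m' hm
end

section
/- The number of 3-nilpotent semigroup structures on a fixed set of cardinality n (up to identity) equals ∑_{r=1}^{n−2} S(r²+1, n−r) · n!/r!, where S denotes the Stirling number of the second kind. -/
open Function

/-- Stirling numbers of the second kind. -/
def stirling : ℕ → ℕ → ℕ
  | 0, 0 => 1
  | 0, _ + 1 => 0
  | _ + 1, 0 => 0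
  | n + 1, k + 1 => stirling n k + (k + 1) * stirling n (k + 1)

/-- Transport surjection subtypes along equivs. -/
def surjEquiv {α α' β β' : Type*} (e1 : α ≃ α') (e2 : β ≃ β') :
    {f : α → β // Surjective f} ≃ {f : α' → β' // Surjective f} where
  toFun f := ⟨e2 ∘ f.1 ∘ e1.symm, (e2.surjective.comp f.2).comp e1.symm.surjective⟩
  invFun g := ⟨e2.symm ∘ g.1 ∘ e1, (e2.symm.surjective.comp g.2).comp e1.surjective⟩
  left_inv f := by ext a; simp
  right_inv g := by ext a; simp

/-- Functions with prescribed range vs surjections onto the range. -/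
def rangeEquiv {α β : Type*} (S : Set β) :
    {f : α → β // Set.range f = S} ≃ {g : α → S // Surjective g} where
  toFun f := ⟨fun a => ⟨f.1 a, by
    have h := Set.mem_range_self (f := f.1) a
    rwa [f.2] at h⟩, by
    rintro ⟨y, hy⟩
    rw [← f.2] at hy
    obtain ⟨a, ha⟩ := hy
    exact ⟨a, Subtype.ext ha⟩⟩
  invFun g := ⟨fun a => (g.1 a : β), by
    have : (fun a => (g.1 a : β)) = Subtype.val ∘ g.1 := rfl
    rw [this, Set.range_comp, g.2.range_eq, Set.image_univ, Subtype.range_coe]⟩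
  left_inv f := rfl
  right_inv g := rfl

lemma insert_eq_univ_iff {β : Type*} (x : β) (R : Set β) :
    insert x R = Set.univ ↔ R = Set.univ ∨ R = {x}ᶜ := by
  constructor
  · intro h
    by_cases hx : x ∈ R
    · left
      apply Set.eq_univ_of_forall
      intro y
      have : y ∈ insert x R := h ▸ Set.mem_univ y
      rcases this with h' | h'
      · exact h' ▸ hx
      · exact h'
    · right
      ext y
      simp only [Set.mem_compl_iff, Set.mem_singleton_iff]
      constructor
      · intro hy hxy; exact hx (hxy ▸ hy)
      · intro hy
        have : y ∈ insert x R := h ▸ Set.mem_univ y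
        rcases this with h' | h'
        · exact absurd h' hy
        · exact h'
  · rintro (h | h)
    · rw [h]; exact Set.insert_eq_self.mpr (Set.mem_univ x)
    · rw [h]; ext y; simp [eq_comm, em]

lemma cons_surj_iff {m k : ℕ} (x : Fin k) (g : Fin m → Fin k) :
    Surjective (Fin.cons x g : Fin (m + 1) → Fin k) ↔
      Surjective g ∨ Set.range g = {x}ᶜ := by
  rw [← Set.range_eq_univ, Fin.range_cons, insert_eq_univ_iff, Set.range_eq_univ]

lemma card_surj_fin (m : ℕ) : ∀ k : ℕ,
    Nat.card {f : Fin m → Fin k // Surjective f} = (Nat.factorial k) * stirling m k := by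
  induction m with
  | zero =>
    intro k
    cases k with
    | zero =>
      have h : ∀ f : Fin 0 → Fin 0, Surjective f := fun f y => y.elim0
      rw [Nat.card_congr (Equiv.subtypeUnivEquiv h)]
      simp [stirling]
    | succ k =>
      have : IsEmpty {f : Fin 0 → Fin (k + 1) // Surjective f} := by
        constructor
        rintro ⟨f, hf⟩
        obtain ⟨a, -⟩ := hf 0
        exact a.elim0
      rw [Nat.card_of_isEmpty]
      simp [stirling]
  | succ m ih =>
    intro k
    cases k with
    | zero =>
      have : IsEmpty {f : Fin (m + 1) → Fin 0 // Surjective f} := by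
        constructor
        rintro ⟨f, -⟩
        exact (f 0).elim0
      rw [Nat.card_of_isEmpty]
      simp [stirling]
    | succ k =>
      -- step
      have e0 : {f : Fin (m + 1) → Fin (k + 1) // Surjective f} ≃
          {p : Fin (k + 1) × (Fin m → Fin (k + 1)) //
            Surjective (Fin.cons p.1 p.2 : Fin (m + 1) → Fin (k + 1))} := by
        refine (Equiv.subtypeEquiv (Fin.consEquiv (fun _ => Fin (k + 1))) ?_).symm
        rintro ⟨x, g⟩
        rfl
      have e1 : {p : Fin (k + 1) × (Fin m → Fin (k + 1)) //
            Surjective (Fin.cons p.1 p.2 : Fin (m + 1) → Fin (k + 1))} ≃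
          (x : Fin (k + 1)) × {g : Fin m → Fin (k + 1) //
            Surjective (Fin.cons x g : Fin (m + 1) → Fin (k + 1))} :=
        Equiv.subtypeProdEquivSigmaSubtype
          (fun (x : Fin (k + 1)) (g : Fin m → Fin (k + 1)) =>
            Surjective (Fin.cons x g : Fin (m + 1) → Fin (k + 1)))
      rw [Nat.card_congr (e0.trans e1), Nat.card_eq_fintype_card, Fintype.card_sigma]
      have hx : ∀ x : Fin (k + 1),
          Fintype.card {g : Fin m → Fin (k + 1) //
            Surjective (Fin.cons x g : Fin (m + 1) → Fin (k + 1))} =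
          Nat.factorial (k + 1) * stirling m (k + 1) + Nat.factorial k * stirling m k := by
        intro x
        have ecard : Fintype.card ({x}ᶜ : Set (Fin (k + 1))) = k := by
          rw [Fintype.card_compl_set, Set.card_singleton, Fintype.card_fin]; omega
        rw [← Nat.card_eq_fintype_card]
        classical
        calc Nat.card {g : Fin m → Fin (k + 1) //
              Surjective (Fin.cons x g : Fin (m + 1) → Fin (k + 1))}
            = Nat.card {g : Fin m → Fin (k + 1) //
                Surjective g ∨ Set.range g = {x}ᶜ} :=
              Nat.card_congr (Equiv.subtypeEquivRight (fun g => cons_surj_iff x g))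
          _ = Nat.card ({g : Fin m → Fin (k + 1) // Surjective g} ⊕
              {g : Fin m → Fin (k + 1) // Set.range g = {x}ᶜ}) := by
              refine Nat.card_congr (subtypeOrEquiv _ _ ?_)
              intro p hp hq g hg
              have h1 := hp g hg
              have h2 := hq g hg
              simp only at h1 h2
              have hm : x ∈ Set.range g := h1.range_eq ▸ Set.mem_univ x
              rw [h2] at hm
              simp at hm
          _ = Nat.card {g : Fin m → Fin (k + 1) // Surjective g} +
              Nat.card {g : Fin m → Fin (k + 1) // Set.range g = {x}ᶜ} := Nat.card_sum
          _ = Nat.factorial (k + 1) * stirling m (k + 1) + Nat.factorial k * stirling m k := by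
              congr 1
              · exact ih (k + 1)
              · rw [Nat.card_congr ((rangeEquiv _).trans
                  (surjEquiv (Equiv.refl _) (Fintype.equivFinOfCardEq ecard)))]
                exact ih k
      rw [Finset.sum_congr rfl (fun x _ => hx x), Finset.sum_const, Finset.card_univ,
        Fintype.card_fin, smul_eq_mul]
      show (k + 1) * _ = Nat.factorial (k + 1) * stirling (m + 1) (k + 1)
      rw [show stirling (m + 1) (k + 1) = stirling m k + (k + 1) * stirling m (k + 1) from rfl,
        Nat.factorial_succ]
      ring

lemma card_surj (α β : Type*) [Fintype α] [Fintype β] :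
    Nat.card {f : α → β // Surjective f} =
      (Nat.factorial (Fintype.card β)) * stirling (Fintype.card α) (Fintype.card β) := by
  rw [Nat.card_congr (surjEquiv (Fintype.equivFin α) (Fintype.equivFin β))]
  exact card_surj_fin _ _


def isGood (n : ℕ) (f : Fin n → Fin n → Fin n) : Prop :=
  (∀ a b c, f (f a b) c = f a (f b c)) ∧
    ∃ z : Fin n, (∀ a, f a z = z ∧ f z a = z) ∧
      (∀ a b c, f (f a b) c = z) ∧ (∃ a b, f a b ≠ z)

variable {n : ℕ}

def img (f : Fin n → Fin n → Fin n) : Finset (Fin n) :=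
  Finset.image (fun p : Fin n × Fin n => f p.1 p.2) Finset.univ

lemma mul_mem_img (f : Fin n → Fin n → Fin n) (a b : Fin n) : f a b ∈ img f :=
  Finset.mem_image.2 ⟨(a, b), Finset.mem_univ _, rfl⟩

lemma mem_img_iff {f : Fin n → Fin n → Fin n} {y : Fin n} :
    y ∈ img f ↔ ∃ a b, f a b = y := by
  simp only [img, Finset.mem_image, Finset.mem_univ, true_and, Prod.exists]

lemma zero_unique {f : Fin n → Fin n → Fin n} {z z' : Fin n}
    (hz : ∀ a, f a z = z ∧ f z a = z) (hz' : ∀ a, f a z' = z' ∧ f z' a = z') : z = z' :=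
  ((hz z').1).symm.trans (hz' z).2

/-- If a factor is itself a product, the product is the zero. -/
lemma prod_factor_eq_zero {f : Fin n → Fin n → Fin n} {z : Fin n}
    (hassoc : ∀ a b c, f (f a b) c = f a (f b c))
    (h3 : ∀ a b c, f (f a b) c = z) {a b : Fin n}
    (hab : a ∈ img f ∨ b ∈ img f) : f a b = z := by
  rcases hab with h | h
  · obtain ⟨c, d, hcd⟩ := mem_img_iff.1 h
    rw [← hcd]; exact h3 c d b
  · obtain ⟨c, d, hcd⟩ := mem_img_iff.1 h
    rw [← hcd, ← hassoc]; exact h3 a c d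


variable {A : Finset (Fin n)} {h : (↑A × ↑A) ⊕ Unit → Fin n}
-- the backward map
def bwd (A : Finset (Fin n)) (h : (↑A × ↑A) ⊕ Unit → Fin n) : Fin n → Fin n → Fin n :=
  fun a b => if hab : a ∈ A ∧ b ∈ A then h (Sum.inl (⟨a, hab.1⟩, ⟨b, hab.2⟩))
    else h (Sum.inr ())

variable {A : Finset (Fin n)} {h : (↑A × ↑A) ⊕ Unit → Fin n}

lemma bwd_val (a b : Fin n) : ∃ v, bwd A h a b = h v := by
  unfold bwd; split
  · exact ⟨_, rfl⟩
  · exact ⟨_, rfl⟩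

lemma bwd_notmem (hr : Set.range h = ↑(Aᶜ)) (a b : Fin n) : bwd A h a b ∉ A := by
  obtain ⟨v, hv⟩ := bwd_val (A := A) (h := h) a b
  rw [hv]
  have : h v ∈ Set.range h := Set.mem_range_self v
  rw [hr] at this
  simpa using this

lemma bwd_z_notmem (hr : Set.range h = ↑(Aᶜ)) : h (Sum.inr ()) ∉ A := by
  have : h (Sum.inr ()) ∈ Set.range h := Set.mem_range_self _
  rw [hr] at this
  simpa using this

lemma bwd_of_not (a b : Fin n) (hab : ¬(a ∈ A ∧ b ∈ A)) :
    bwd A h a b = h (Sum.inr ()) := dif_neg hab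

lemma bwd_of_mem {a b : Fin n} (ha : a ∈ A) (hb : b ∈ A) :
    bwd A h a b = h (Sum.inl (⟨a, ha⟩, ⟨b, hb⟩)) := dif_pos ⟨ha, hb⟩

lemma bwd_zero (hr : Set.range h = ↑(Aᶜ)) (a : Fin n) :
    bwd A h a (h (Sum.inr ())) = h (Sum.inr ()) ∧
      bwd A h (h (Sum.inr ())) a = h (Sum.inr ()) :=
  ⟨bwd_of_not _ _ (fun hab => bwd_z_notmem hr hab.2),
   bwd_of_not _ _ (fun hab => bwd_z_notmem hr hab.1)⟩

lemma bwd_h3 (hr : Set.range h = ↑(Aᶜ)) (a b c : Fin n) :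
    bwd A h (bwd A h a b) c = h (Sum.inr ()) :=
  bwd_of_not _ _ (fun hab => bwd_notmem hr a b hab.1)

lemma bwd_assoc (hr : Set.range h = ↑(Aᶜ)) (a b c : Fin n) :
    bwd A h (bwd A h a b) c = bwd A h a (bwd A h b c) := by
  rw [bwd_h3 hr, bwd_of_not _ _ (fun hab => bwd_notmem hr b c hab.2)]

lemma img_bwd (hr : Set.range h = ↑(Aᶜ)) : img (bwd A h) = Aᶜ := by
  ext y
  constructor
  · intro hy
    obtain ⟨⟨a, b⟩, -, hab⟩ := Finset.mem_image.1 hy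
    have := bwd_notmem (A := A) (h := h) hr a b
    rw [hab] at this
    simpa using this
  · intro hy
    have : y ∈ Set.range h := by rw [hr]; exact hy
    obtain ⟨v, hv⟩ := this
    rcases v with ⟨a, b⟩ | u
    · refine Finset.mem_image.2 ⟨(a.1, b.1), Finset.mem_univ _, ?_⟩
      rw [bwd_of_mem a.2 b.2, ← hv]
    · refine Finset.mem_image.2 ⟨(h (Sum.inr ()), h (Sum.inr ())), Finset.mem_univ _, ?_⟩
      rw [(bwd_zero hr _).1, ← hv]

lemma bwd_good (hr : Set.range h = ↑(Aᶜ)) (hA1 : 1 ≤ A.card) (hA2 : A.card ≤ n - 2) :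
    isGood n (bwd A h) := by
  have hcompl : 1 < (Aᶜ).card := by
    have h1 : (Aᶜ).card = n - A.card := by
      rw [Finset.card_compl, Fintype.card_fin]
    have h2 : A.card ≤ n := by
      simpa using Finset.card_le_univ A
    omega
  obtain ⟨y, hy, hyz⟩ := Finset.exists_mem_ne hcompl (h (Sum.inr ()))
  have hyr : y ∈ Set.range h := by rw [hr]; exact_mod_cast hy
  obtain ⟨v, hv⟩ := hyr
  refine ⟨bwd_assoc hr, h (Sum.inr ()), bwd_zero hr, bwd_h3 hr, ?_⟩
  rcases v with ⟨a, b⟩ | u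
  · exact ⟨a.1, b.1, by rw [bwd_of_mem a.2 b.2, hv]; exact hyz⟩
  · exact absurd (hv.trans rfl) (by rw [hv] at hyz ⊢; simpa using hyz.symm)

noncomputable def zof {f : Fin n → Fin n → Fin n} (hf : isGood n f) : Fin n := hf.2.choose

lemma zof_spec {f : Fin n → Fin n → Fin n} (hf : isGood n f) :
    (∀ a, f a (zof hf) = zof hf ∧ f (zof hf) a = zof hf) ∧
      (∀ a b c, f (f a b) c = zof hf) ∧ (∃ a b, f a b ≠ zof hf) := hf.2.choose_spec

noncomputable def fwd {f : Fin n → Fin n → Fin n} (hf : isGood n f) (A : Finset (Fin n)) :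
    (↑A × ↑A) ⊕ Unit → Fin n :=
  Sum.elim (fun p => f p.1.1 p.2.1) (fun _ => zof hf)

lemma fwd_range {f : Fin n → Fin n → Fin n} (hf : isGood n f) {A : Finset (Fin n)}
    (hA : (img f)ᶜ = A) : Set.range (fwd hf A) = ↑(Aᶜ) := by
  have hAc : Aᶜ = img f := by rw [← hA, compl_compl]
  rw [hAc]
  unfold fwd
  rw [Set.Sum.elim_range]
  ext y
  constructor
  · rintro (⟨p, rfl⟩ | ⟨u, rfl⟩)
    · exact mul_mem_img f _ _
    · have hz := ((zof_spec hf).1 (zof hf)).1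
      exact_mod_cast hz ▸ mul_mem_img f (zof hf) (zof hf)
  · intro hy
    obtain ⟨a, b, rfl⟩ := mem_img_iff.1 (by exact_mod_cast hy)
    by_cases hab : a ∈ A ∧ b ∈ A
    · exact Or.inl ⟨(⟨a, hab.1⟩, ⟨b, hab.2⟩), rfl⟩
    · have : f a b = zof hf := by
        apply prod_factor_eq_zero hf.1 (zof_spec hf).2.1
        rcases not_and_or.1 hab with ha | ha
        · left
          have : a ∉ (img f)ᶜ := by rw [hA]; exact ha
          simpa using this
        · right
          have : b ∉ (img f)ᶜ := by rw [hA]; exact ha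
          simpa using this
      exact Or.inr ⟨(), this.symm⟩

noncomputable def fiberEquiv (A : Finset (Fin n)) (hA1 : 1 ≤ A.card) (hA2 : A.card ≤ n - 2) :
    {g : {f : Fin n → Fin n → Fin n // isGood n f} // (img g.1)ᶜ = A} ≃
      {h : (↑A × ↑A) ⊕ Unit → Fin n // Set.range h = ↑(Aᶜ)} where
  toFun g := ⟨fwd g.1.2 A, fwd_range g.1.2 g.2⟩
  invFun h := ⟨⟨bwd A h.1, bwd_good h.2 hA1 hA2⟩, by rw [img_bwd h.2, compl_compl]⟩
  left_inv := by
    rintro ⟨⟨f, hf⟩, hA⟩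
    apply Subtype.ext
    apply Subtype.ext
    funext a b
    show bwd A (fwd hf A) a b = f a b
    by_cases hab : a ∈ A ∧ b ∈ A
    · rw [bwd_of_mem hab.1 hab.2]; rfl
    · rw [bwd_of_not _ _ hab]
      show zof hf = f a b
      symm
      apply prod_factor_eq_zero hf.1 (zof_spec hf).2.1
      rcases not_and_or.1 hab with ha | ha
      · left
        have : a ∉ (img f)ᶜ := by rw [hA]; exact ha
        simpa using this
      · right
        have : b ∉ (img f)ᶜ := by rw [hA]; exact ha
        simpa using this
  right_inv := by
    rintro ⟨h, hr⟩
    apply Subtype.ext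
    funext v
    rcases v with ⟨a, b⟩ | u
    · show bwd A h a.1 b.1 = h (Sum.inl (a, b))
      rw [bwd_of_mem a.2 b.2]
    · show zof (bwd_good hr hA1 hA2) = h (Sum.inr ())
      exact zero_unique (zof_spec (bwd_good hr hA1 hA2)).1 (bwd_zero hr)

lemma card_target (A : Finset (Fin n)) :
    Nat.card {h : (↑A × ↑A) ⊕ Unit → Fin n // Set.range h = ↑(Aᶜ)} =
      Nat.factorial (n - A.card) * stirling (A.card ^ 2 + 1) (n - A.card) := by
  rw [Nat.card_congr (rangeEquiv _), card_surj]
  have h1 : Fintype.card ((↑A × ↑A) ⊕ Unit) = A.card ^ 2 + 1 := by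
    simp [sq]
  have h2 : Fintype.card (↑(Aᶜ) : Set (Fin n)) = n - A.card := by
    rw [← Nat.card_eq_fintype_card, Nat.card_coe_set_eq, Set.ncard_coe_finset,
      Finset.card_compl, Fintype.card_fin]
  rw [h1, h2]

set_option maxHeartbeats 2000000 in
/-- The number of 3-nilpotent semigroup structures on a fixed `n`-element set
(up to identity) equals `∑_{r=1}^{n-2} S(r²+1, n-r) · n!/r!`. -/
theorem stmt5 (n : ℕ) :
    Nat.card {f : Fin n → Fin n → Fin n //
      (∀ a b c, f (f a b) c = f a (f b c)) ∧
      ∃ z : Fin n, (∀ a, f a z = z ∧ f z a = z) ∧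
        (∀ a b c, f (f a b) c = z) ∧ (∃ a b, f a b ≠ z)} =
    ∑ r ∈ Finset.Icc 1 (n - 2),
      stirling (r ^ 2 + 1) (n - r) * (Nat.factorial n / Nat.factorial r) := by
  classical
  show Nat.card {f : Fin n → Fin n → Fin n // isGood n f} = _
  set S : Finset (Finset (Fin n)) :=
    Finset.univ.filter (fun A => 1 ≤ A.card ∧ A.card ≤ n - 2) with hS
  have hφmem : ∀ g : {f : Fin n → Fin n → Fin n // isGood n f}, (img g.1)ᶜ ∈ S := by
    rintro ⟨f, hf⟩
    obtain ⟨hassoc, z, hz, h3, a, b, hab⟩ := hf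
    have ha' : a ∉ img f := fun hmem =>
      hab (prod_factor_eq_zero hassoc h3 (Or.inl hmem))
    have h1 : 1 ≤ (img f)ᶜ.card :=
      Finset.card_pos.2 ⟨a, Finset.mem_compl.2 ha'⟩
    have h2 : 1 < (img f).card := by
      refine Finset.one_lt_card.2 ⟨f a b, mul_mem_img f a b, z, ?_, hab⟩
      have : f a z = z := (hz a).1
      exact this ▸ mul_mem_img f a z
    have h3' : (img f)ᶜ.card = n - (img f).card := by
      rw [Finset.card_compl, Fintype.card_fin]
    have h4 : (img f).card ≤ n := by simpa using Finset.card_le_univ (img f)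
    simp only [hS, Finset.mem_filter, Finset.mem_univ, true_and]
    exact ⟨h1, by omega⟩
  set φ : {f : Fin n → Fin n → Fin n // isGood n f} → ↥S :=
    fun g => ⟨(img g.1)ᶜ, hφmem g⟩ with hφ
  calc Nat.card {f : Fin n → Fin n → Fin n // isGood n f}
      = Nat.card ((A : ↥S) × {g : {f : Fin n → Fin n → Fin n // isGood n f} // φ g = A}) :=
        (Nat.card_congr (Equiv.sigmaFiberEquiv φ)).symm
    _ = ∑ A : ↥S, Nat.card {g : {f : Fin n → Fin n → Fin n // isGood n f} // φ g = A} := by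
        rw [Nat.card_eq_fintype_card, Fintype.card_sigma]
        simp [Nat.card_eq_fintype_card]
    _ = ∑ A : ↥S, Nat.factorial (n - (A : Finset (Fin n)).card) *
          stirling ((A : Finset (Fin n)).card ^ 2 + 1) (n - (A : Finset (Fin n)).card) := by
        refine Finset.sum_congr rfl (fun A _ => ?_)
        have hA := A.2
        simp only [hS, Finset.mem_filter, Finset.mem_univ, true_and] at hA
        have e1 : {g : {f : Fin n → Fin n → Fin n // isGood n f} // φ g = A} ≃
            {g : {f : Fin n → Fin n → Fin n // isGood n f} // (img g.1)ᶜ = (A : Finset (Fin n))} :=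
          Equiv.subtypeEquivRight (fun g => by rw [hφ, Subtype.ext_iff])
        rw [Nat.card_congr (e1.trans (fiberEquiv (A : Finset (Fin n)) hA.1 hA.2)), card_target]
    _ = ∑ A ∈ S, Nat.factorial (n - A.card) * stirling (A.card ^ 2 + 1) (n - A.card) :=
        Finset.sum_coe_sort S
          (fun A => Nat.factorial (n - A.card) * stirling (A.card ^ 2 + 1) (n - A.card))
    _ = ∑ r ∈ Finset.Icc 1 (n - 2), ∑ A ∈ S.filter (fun A => A.card = r),
          Nat.factorial (n - A.card) * stirling (A.card ^ 2 + 1) (n - A.card) := by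
        refine (Finset.sum_fiberwise_of_maps_to ?_ _).symm
        intro A hA
        simp only [hS, Finset.mem_filter, Finset.mem_univ, true_and] at hA
        exact Finset.mem_Icc.2 hA
    _ = ∑ r ∈ Finset.Icc 1 (n - 2),
          Nat.choose n r * (Nat.factorial (n - r) * stirling (r ^ 2 + 1) (n - r)) := by
        refine Finset.sum_congr rfl (fun r hr => ?_)
        have hr' := Finset.mem_Icc.1 hr
        have hfilter : S.filter (fun A => A.card = r) = Finset.powersetCard r Finset.univ := by
          rw [Finset.powersetCard_eq_filter, Finset.powerset_univ]
          ext A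
          simp only [hS, Finset.filter_filter, Finset.mem_filter, Finset.mem_univ, true_and]
          constructor
          · rintro ⟨-, h⟩; exact h
          · intro h; exact ⟨⟨by omega, by omega⟩, h⟩
        rw [Finset.sum_congr rfl (fun A hA => by
              rw [(Finset.mem_filter.1 hA).2]),
          Finset.sum_const, hfilter, Finset.card_powersetCard, Finset.card_univ,
          Fintype.card_fin, smul_eq_mul]
    _ = ∑ r ∈ Finset.Icc 1 (n - 2),
          stirling (r ^ 2 + 1) (n - r) * (Nat.factorial n / Nat.factorial r) := by
        refine Finset.sum_congr rfl (fun r hr => ?_)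
        have hr' := Finset.mem_Icc.1 hr
        have hrn : r ≤ n := by omega
        have key := Nat.choose_mul_factorial_mul_factorial hrn
        have hdiv : Nat.factorial n / Nat.factorial r = Nat.choose n r * Nat.factorial (n - r) := by
          have h2 : Nat.choose n r * Nat.factorial r * Nat.factorial (n - r) =
              Nat.choose n r * Nat.factorial (n - r) * Nat.factorial r := by ring
          rw [← key, h2, Nat.mul_div_cancel _ (Nat.factorial_pos r)]
        rw [hdiv]
        ring
end

section
/- The number of commutative 3-nilpotent semigroup structures on a fixed set of cardinality n equals ∑_{r=1}^{n−2} S(r(r+1)/2 + 1, n−r) · n!/r!. -/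
/-!
Let `f` be a commutative 3-nilpotent multiplication with zero `z`, and let `A` be the set of
elements that are not products. A product with a factor outside `A` is a product of three
elements, hence `z`; so `f` is determined by its restriction to `A`, a symmetric map
`Sym2 A → Aᶜ`, together with `z ∈ Aᶜ`. These combine into a surjection `Option (Sym2 A) → Aᶜ`,
and conversely every such surjection with `|Aᶜ| ≥ 2` comes from exactly one such `f`. For
`|A| = r` there are `C(n, r)` choices of `A` and `(n - r)! S(r(r+1)/2 + 1, n - r)` surjections,
and `C(n, r) (n - r)! = n! / r!`.
-/

open Function Finset Nat

theorem stirling_eq_stirlingSecond : stirling = stirlingSecond := by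
  funext n k
  induction n generalizing k with
  | zero => cases k <;> rfl
  | succ n ih => cases k <;> simp [stirling, stirlingSecond_succ_succ, ih, add_comm]

section Surjections

variable {α α' β β' : Type*}

lemma card_surjective_congr (e : α ≃ α') (e' : β ≃ β') :
    Nat.card {f : α → β // Surjective f} = Nat.card {f : α' → β' // Surjective f} :=
  Nat.card_congr <| (e.arrowCongr e').subtypeEquiv fun f => by
    simp [Equiv.arrowCongr, EquivLike.comp_surjective, EquivLike.surjective_comp]

lemma card_compl_singleton_subset_range [Finite α] [Finite β] (b : β) :
    Nat.card {g : α → β // {b}ᶜ ⊆ Set.range g} =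
      Nat.card {g : α → β // Surjective g} + Nat.card {g : α → {y // y ≠ b} // Surjective g} := by
  classical
  rw [← Nat.card_sum]
  refine Nat.card_congr <| (Equiv.sumCompl fun g : {g : α → β // {b}ᶜ ⊆ Set.range g} =>
    b ∈ Set.range g.1).symm.trans (Equiv.sumCongr ?_ ?_)
  · refine (Equiv.subtypeSubtypeEquivSubtypeInter (fun g : α → β => {b}ᶜ ⊆ Set.range g)
      (fun g => b ∈ Set.range g)).trans (Equiv.subtypeEquivRight fun g => ?_)
    rw [← Set.range_eq_univ, ← Set.singleton_subset_iff, ← Set.union_subset_iff,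
      Set.compl_union_self, Set.univ_subset_iff]
  · exact
    { toFun g := ⟨fun a => ⟨g.1.1 a, fun h => g.2 ⟨a, h⟩⟩, fun y => by
        obtain ⟨a, ha⟩ := g.1.2 y.2
        exact ⟨a, Subtype.ext ha⟩⟩
      invFun g := ⟨⟨Subtype.val ∘ g.1, fun y hy => by
        obtain ⟨a, ha⟩ := g.2 ⟨y, hy⟩
        exact ⟨a, congrArg Subtype.val ha⟩⟩, fun ⟨a, ha⟩ => (g.1 a).2 ha⟩
      left_inv _ := rfl
      right_inv _ := rfl }

lemma card_surjective_fin_succ [Fintype β] (m : ℕ) :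
    Nat.card {f : Fin (m + 1) → β // Surjective f} =
      ∑ b : β, Nat.card {g : Fin m → β // {b}ᶜ ⊆ Set.range g} := by
  rw [← Nat.card_sigma]
  refine Nat.card_congr <| ((Fin.consEquiv fun _ => β).symm.subtypeEquiv fun f => ?_).trans
    (Equiv.subtypeProdEquivSigmaSubtype fun b g => {b}ᶜ ⊆ Set.range g)
  rw [← Set.range_eq_univ, Fin.range_fin_succ, Set.insert_eq, ← Set.compl_subset_iff_union]
  rfl

theorem card_surjective_fin (m : ℕ) : ∀ (β : Type*) [Fintype β],
    Nat.card {f : Fin m → β // Surjective f} =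
      stirlingSecond m (Fintype.card β) * (Fintype.card β)! := by
  induction m with
  | zero =>
    intro β _
    rcases isEmpty_or_nonempty β with hβ | hβ
    · have : Unique {f : Fin 0 → β // Surjective f} :=
        ⟨⟨⟨finZeroElim, isEmptyElim⟩⟩, fun f => Subtype.ext (funext finZeroElim)⟩
      simp
    · have : IsEmpty {f : Fin 0 → β // Surjective f} :=
        ⟨fun f => (f.2 (Classical.arbitrary β)).choose.elim0⟩
      obtain ⟨k, hk⟩ := Nat.exists_eq_succ_of_ne_zero (Fintype.card_ne_zero (α := β))
      simp [hk]
  | succ m ih =>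
    intro β _
    classical
    simp_rw [card_surjective_fin_succ, card_compl_singleton_subset_range, ih,
      Fintype.card_subtype_compl, Fintype.card_unique]
    rw [sum_const, Finset.card_univ, smul_eq_mul]
    rcases Fintype.card β with _ | k
    · simp
    · rw [stirlingSecond_succ_succ, factorial_succ, Nat.add_sub_cancel]
      ring

theorem card_surjective [Fintype α] [Fintype β] :
    Nat.card {f : α → β // Surjective f} =
      stirlingSecond (Fintype.card α) (Fintype.card β) * (Fintype.card β)! := by
  rw [card_surjective_congr (Fintype.equivFin α) (Equiv.refl β), card_surjective_fin]

end Surjections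

lemma sum_subtype_card_mem {α M : Type*} [Fintype α] [AddCommMonoid M] (s : Finset ℕ)
    (g : ℕ → M) :
    ∑ A : {A : Finset α // #A ∈ s}, g #A.1 = ∑ r ∈ s, (Fintype.card α).choose r • g r := by
  classical
  rw [← sum_subtype {A : Finset α | #A ∈ s} (by simp) (fun A => g #A),
    ← sum_fiberwise_eq_sum_filter' univ s card g]
  refine sum_congr rfl fun r _ => ?_
  rw [sum_const, univ_filter_card_eq, card_powersetCard, Finset.card_univ]

def IsCommThreeNilpotent {α : Type*} (f : α → α → α) : Prop :=
  (∀ a b, f a b = f b a) ∧ (∀ a b c, f (f a b) c = f a (f b c)) ∧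
    ∃ z, (∀ a, f a z = z ∧ f z a = z) ∧ (∀ a b c, f (f a b) c = z) ∧ ∃ a b, f a b ≠ z

section Tables

variable {α : Type*} [Fintype α] [DecidableEq α]

/-- `A` plays the role of the set of non-products and `h none` that of the zero. -/
def mulOfTable (A : Finset α) (h : Option (Sym2 A) → (Aᶜ : Finset α)) (x y : α) : α :=
  if hxy : x ∈ A ∧ y ∈ A then h (some s(⟨x, hxy.1⟩, ⟨y, hxy.2⟩)) else h none

variable {A : Finset α} {h : Option (Sym2 A) → (Aᶜ : Finset α)} {x y : α}

lemma mulOfTable_of_mem (hx : x ∈ A) (hy : y ∈ A) :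
    mulOfTable A h x y = h (some s(⟨x, hx⟩, ⟨y, hy⟩)) :=
  dif_pos ⟨hx, hy⟩

lemma mulOfTable_of_notMem_left (hx : x ∉ A) : mulOfTable A h x y = h none :=
  dif_neg fun hxy => hx hxy.1

lemma mulOfTable_of_notMem_right (hy : y ∉ A) : mulOfTable A h x y = h none :=
  dif_neg fun hxy => hy hxy.2

lemma val_apply_notMem (t : Option (Sym2 A)) : (h t : α) ∉ A :=
  mem_compl.mp (h t).2

lemma mulOfTable_notMem : mulOfTable A h x y ∉ A := by
  unfold mulOfTable
  split <;> exact val_apply_notMem _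

lemma mulOfTable_comm (x y : α) : mulOfTable A h x y = mulOfTable A h y x := by
  by_cases hx : x ∈ A <;> by_cases hy : y ∈ A
  · rw [mulOfTable_of_mem hx hy, mulOfTable_of_mem hy hx, Sym2.eq_swap]
  · rw [mulOfTable_of_notMem_right hy, mulOfTable_of_notMem_left hy]
  · rw [mulOfTable_of_notMem_left hx, mulOfTable_of_notMem_right hx]
  · rw [mulOfTable_of_notMem_left hx, mulOfTable_of_notMem_left hy]

lemma mulOfTable_mulOfTable_left (x y z : α) : mulOfTable A h (mulOfTable A h x y) z = h none :=
  mulOfTable_of_notMem_left mulOfTable_notMem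

lemma exists_mulOfTable_eq (hs : Surjective h) {w : α} (hw : w ∉ A) :
    ∃ x y, mulOfTable A h x y = w := by
  obtain ⟨t, ht⟩ := hs ⟨w, mem_compl.mpr hw⟩
  cases t with
  | none => exact ⟨w, w, by rw [mulOfTable_of_notMem_left hw, ht]⟩
  | some p =>
    induction p using Sym2.ind with
    | _ u v => exact ⟨u, v, by rw [mulOfTable_of_mem u.2 v.2, ht]⟩

theorem isCommThreeNilpotent_mulOfTable (hA : 2 ≤ #Aᶜ) (hs : Surjective h) :
    IsCommThreeNilpotent (mulOfTable A h) := by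
  refine ⟨mulOfTable_comm, fun x y z => ?_, h none, fun x => ⟨?_, ?_⟩,
    mulOfTable_mulOfTable_left, ?_⟩
  · rw [mulOfTable_mulOfTable_left, mulOfTable_of_notMem_right mulOfTable_notMem]
  · exact mulOfTable_of_notMem_right (val_apply_notMem _)
  · exact mulOfTable_of_notMem_left (val_apply_notMem _)
  · obtain ⟨w, hw, hwz⟩ := exists_mem_ne hA (h none : α)
    obtain ⟨x, y, hxy⟩ := exists_mulOfTable_eq hs (mem_compl.mp hw)
    exact ⟨x, y, hxy ▸ hwz⟩

theorem mulOfTable_injective (A : Finset α) : Injective (mulOfTable A) := by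
  intro h₁ h₂ heq
  have hz : h₁ none = h₂ none := Subtype.ext <| by
    simpa only [mulOfTable_of_notMem_left (val_apply_notMem none)] using
      congrFun (congrFun heq (h₁ none)) (h₁ none)
  funext t
  cases t with
  | none => exact hz
  | some p =>
    induction p using Sym2.ind with
    | _ u v =>
      exact Subtype.ext <| by
        simpa only [mulOfTable_of_mem u.2 v.2] using congrFun (congrFun heq u) v

def nonProducts (f : α → α → α) : Finset α := {a | ∀ x y, f x y ≠ a}

lemma mem_nonProducts {f : α → α → α} {a : α} : a ∈ nonProducts f ↔ ∀ x y, f x y ≠ a := by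
  simp [nonProducts]

lemma notMem_nonProducts {f : α → α → α} {a : α} : a ∉ nonProducts f ↔ ∃ x y, f x y = a := by
  simp [mem_nonProducts]

lemma mul_notMem_nonProducts (f : α → α → α) (x y : α) : f x y ∉ nonProducts f :=
  notMem_nonProducts.mpr ⟨x, y, rfl⟩

lemma nonProducts_mulOfTable (hs : Surjective h) : nonProducts (mulOfTable A h) = A := by
  ext a
  refine ⟨fun ha => ?_, fun ha => mem_nonProducts.mpr fun x y hxy => mulOfTable_notMem (hxy ▸ ha)⟩
  by_contra haA
  obtain ⟨x, y, hxy⟩ := exists_mulOfTable_eq hs haA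
  exact mem_nonProducts.mp ha x y hxy

section Recovery

variable {f : α → α → α}

lemma eq_of_notMem_nonProducts_left {z : α} (hz : ∀ a b c, f (f a b) c = z)
    (hx : x ∉ nonProducts f) : f x y = z := by
  obtain ⟨u, v, rfl⟩ := notMem_nonProducts.mp hx
  exact hz u v y

lemma eq_of_notMem_nonProducts_right {z : α} (hcomm : ∀ a b, f a b = f b a)
    (hz : ∀ a b c, f (f a b) c = z) (hy : y ∉ nonProducts f) : f x y = z :=
  hcomm y x ▸ eq_of_notMem_nonProducts_left hz hy

theorem card_nonProducts_mem_Icc (hf : IsCommThreeNilpotent f) :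
    #(nonProducts f) ∈ Icc 1 (Fintype.card α - 2) := by
  obtain ⟨-, -, z, hzero, hz, a, b, hab⟩ := hf
  have ha : a ∈ nonProducts f := by
    by_contra ha
    exact hab (eq_of_notMem_nonProducts_left hz ha)
  have hsub : {z, f a b} ⊆ (nonProducts f)ᶜ := by
    rw [insert_subset_iff, singleton_subset_iff, mem_compl, mem_compl, ← (hzero z).1]
    exact ⟨mul_notMem_nonProducts f z z, mul_notMem_nonProducts f a b⟩
  have hcompl := card_le_card hsub
  rw [card_pair (Ne.symm hab), card_compl] at hcompl
  have := card_pos.mpr ⟨a, ha⟩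
  rw [mem_Icc]
  omega

theorem exists_mulOfTable_eq_of_isCommThreeNilpotent (hf : IsCommThreeNilpotent f) :
    ∃ h : Option (Sym2 (nonProducts f)) → ((nonProducts f)ᶜ : Finset α),
      Surjective h ∧ mulOfTable _ h = f := by
  obtain ⟨hcomm, -, z, hzero, hz, -⟩ := hf
  have hprod (x y : α) : f x y ∈ (nonProducts f)ᶜ := mem_compl.mpr (mul_notMem_nonProducts f x y)
  let h : Option (Sym2 (nonProducts f)) → ((nonProducts f)ᶜ : Finset α)
    | none => ⟨z, (hzero z).1 ▸ hprod z z⟩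
    | some p => Sym2.lift ⟨fun u v : nonProducts f => ⟨f u v, hprod u v⟩,
        fun u v => Subtype.ext (hcomm u v)⟩ p
  refine ⟨h, fun ⟨w, hw⟩ => ?_, funext₂ fun x y => ?_⟩
  · by_cases hwz : w = z
    · exact ⟨none, Subtype.ext hwz.symm⟩
    obtain ⟨x, y, rfl⟩ := notMem_nonProducts.mp (mem_compl.mp hw)
    have hx : x ∈ nonProducts f := by
      by_contra hx
      exact hwz (eq_of_notMem_nonProducts_left hz hx)
    have hy : y ∈ nonProducts f := by
      by_contra hy
      exact hwz (eq_of_notMem_nonProducts_right hcomm hz hy)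
    exact ⟨some s(⟨x, hx⟩, ⟨y, hy⟩), rfl⟩
  · by_cases hx : x ∈ nonProducts f
    · by_cases hy : y ∈ nonProducts f
      · rw [mulOfTable_of_mem hx hy]
        rfl
      · rw [mulOfTable_of_notMem_right hy, eq_of_notMem_nonProducts_right hcomm hz hy]
    · rw [mulOfTable_of_notMem_left hx, eq_of_notMem_nonProducts_left hz hx]

end Recovery

def toCommThreeNilpotent
    (t : Σ A : {A : Finset α // #A ∈ Icc 1 (Fintype.card α - 2)},
      {h : Option (Sym2 A.1) → (A.1ᶜ : Finset α) // Surjective h}) :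
    {f : α → α → α // IsCommThreeNilpotent f} :=
  ⟨mulOfTable t.1.1 t.2.1, isCommThreeNilpotent_mulOfTable
    (by have := mem_Icc.mp t.1.2; rw [card_compl]; omega) t.2.2⟩

theorem toCommThreeNilpotent_bijective : Bijective (toCommThreeNilpotent (α := α)) := by
  refine ⟨?_, ?_⟩
  · rintro ⟨A₁, h₁, hs₁⟩ ⟨A₂, h₂, hs₂⟩ heq
    have hf : mulOfTable A₁.1 h₁ = mulOfTable A₂.1 h₂ := congrArg Subtype.val heq
    obtain rfl : A₁ = A₂ := Subtype.ext <| calc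
      A₁.1 = nonProducts (mulOfTable A₁.1 h₁) := (nonProducts_mulOfTable hs₁).symm
      _ = A₂.1 := by rw [hf, nonProducts_mulOfTable hs₂]
    obtain rfl := mulOfTable_injective A₁.1 hf
    rfl
  · rintro ⟨f, hf⟩
    obtain ⟨h, hs, hh⟩ := exists_mulOfTable_eq_of_isCommThreeNilpotent hf
    exact ⟨⟨⟨nonProducts f, card_nonProducts_mem_Icc hf⟩, h, hs⟩, Subtype.ext hh⟩

theorem card_isCommThreeNilpotent :
    Nat.card {f : α → α → α // IsCommThreeNilpotent f} =
      ∑ r ∈ Icc 1 (Fintype.card α - 2),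
        stirlingSecond (r * (r + 1) / 2 + 1) (Fintype.card α - r) * ((Fintype.card α)! / r !) := by
  rw [← Nat.card_congr (Equiv.ofBijective _ toCommThreeNilpotent_bijective), Nat.card_sigma]
  simp_rw [card_surjective, Fintype.card_option, Sym2.card, Fintype.card_coe, card_compl]
  refine (sum_subtype_card_mem _ fun r =>
    ((r + 1).choose 2 + 1).stirlingSecond (Fintype.card α - r) * (Fintype.card α - r)!).trans
    (sum_congr rfl fun r hr => ?_)
  have hrn : r ≤ Fintype.card α := by have := mem_Icc.mp hr; omega
  rw [Nat.div_eq_of_eq_mul_left r.factorial_pos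
    (by rw [mul_right_comm, choose_mul_factorial_mul_factorial hrn]), choose_two_right,
    Nat.add_sub_cancel, smul_eq_mul, mul_comm (r + 1)]
  ring

end Tables

/-- The number of commutative 3-nilpotent semigroup structures on a fixed
`n`-element set equals `∑_{r=1}^{n-2} S(r(r+1)/2+1, n-r) · n!/r!`. -/
theorem stmt6 (n : ℕ) :
    Nat.card {f : Fin n → Fin n → Fin n //
      (∀ a b, f a b = f b a) ∧
      (∀ a b c, f (f a b) c = f a (f b c)) ∧
      ∃ z : Fin n, (∀ a, f a z = z ∧ f z a = z) ∧
        (∀ a b c, f (f a b) c = z) ∧ (∃ a b, f a b ≠ z)} =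
    ∑ r ∈ Finset.Icc 1 (n - 2),
      stirling (r * (r + 1) / 2 + 1) (n - r) * (Nat.factorial n / Nat.factorial r) := by
  rw [stirling_eq_stirlingSecond]
  exact card_isCommThreeNilpotent.trans (by rw [Fintype.card_fin])
end

section
/- In the setting of a frieze construction: given t cycles of π with lengths λ₁,…,λ_t all divisible by d, the number of distinct partitions of the union of these cycles into d blocks of the form {F₀, F₀π, …, F₀π^{d−1}} (where F₀ = ⋃_q Eπ^{dq} for some cross-section E) equals d^{t−1}. -/
/-- `C` is a cycle (orbit) of the permutation `π`. -/
def IsCycleOf {α : Type*} (π : Equiv.Perm α) (C : Set α) : Prop :=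
  ∃ y, C = {x | ∃ i : ℕ, (π ^ i) y = x}

/-- `F₀ = ⋃_{q ∈ ℕ} Eπ^{dq}`. -/
def F0 {Y : Type*} (π : Equiv.Perm Y) (E : Set Y) (d : ℕ) : Set Y :=
  {x | ∃ y ∈ E, ∃ q : ℕ, (π ^ (d * q)) y = x}

/-- The frieze `{F₀, F₀π, …, F₀π^{d-1}}` determined by `E` and `d`. -/
def frieze {Y : Type*} (π : Equiv.Perm Y) (E : Set Y) (d : ℕ) : Set (Set Y) :=
  {B | ∃ i < d, B = (fun y => (π ^ i) y) '' F0 π E d}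

section Aux

variable {Y : Type*} [Fintype Y] (π : Equiv.Perm Y)

private lemma perm_comp_pow (u v : ℕ) (x : Y) : (π ^ u) ((π ^ v) x) = (π ^ (u + v)) x := by
  rw [pow_add, Equiv.Perm.mul_apply]

private lemma perm_periodic (y : Y) : y ∈ Function.periodicPts ⇑π := by
  refine ⟨orderOf π, orderOf_pos π, ?_⟩
  show (⇑π)^[orderOf π] y = y
  rw [← Equiv.Perm.coe_pow, pow_orderOf_eq_one]
  rfl

private lemma pow_apply_eq_iff (y : Y) (i j : ℕ) :
    (π ^ i) y = (π ^ j) y ↔ i ≡ j [MOD Function.minimalPeriod ⇑π y] := by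
  have key : ∀ a b : ℕ, a ≤ b → (π ^ a) y = (π ^ b) y →
      Function.minimalPeriod ⇑π y ∣ b - a := by
    intro a b hab h
    have h1 : (π ^ a) ((π ^ (b - a)) y) = (π ^ a) y := by
      rw [perm_comp_pow, Nat.add_sub_cancel' hab, h]
    have h2 : (π ^ (b - a)) y = y := (π ^ a).injective h1
    have h3 : Function.IsPeriodicPt ⇑π (b - a) y := by
      show (⇑π)^[b - a] y = y
      rw [← Equiv.Perm.coe_pow]; exact h2
    exact h3.minimalPeriod_dvd
  constructor
  · intro h
    rcases le_total i j with hij | hij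
    · exact (Nat.modEq_iff_dvd' hij).2 (key i j hij h)
    · exact ((Nat.modEq_iff_dvd' hij).2 (key j i hij h.symm)).symm
  · intro h
    have h1 : ∀ k : ℕ, (π ^ k) y = (π ^ (k % Function.minimalPeriod ⇑π y)) y := by
      intro k
      have := Function.iterate_mod_minimalPeriod_eq (f := ⇑π) (x := y) (n := k)
      rw [← Equiv.Perm.coe_pow, ← Equiv.Perm.coe_pow] at this
      exact this.symm
    rw [h1 i, h1 j, h]

private lemma orbit_ncard (y : Y) :
    {x | ∃ i : ℕ, (π ^ i) y = x}.ncard = Function.minimalPeriod ⇑π y := by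
  classical
  set n := Function.minimalPeriod ⇑π y with hn
  have hnpos : 0 < n := Function.minimalPeriod_pos_of_mem_periodicPts (perm_periodic π y)
  have hset : {x | ∃ i : ℕ, (π ^ i) y = x}
      = ↑((Finset.range n).image fun k => (π ^ k) y) := by
    ext x
    simp only [Finset.coe_image, Finset.coe_range, Set.mem_image, Set.mem_Iio,
      Set.mem_setOf_eq]
    constructor
    · rintro ⟨i, rfl⟩
      exact ⟨i % n, Nat.mod_lt _ hnpos,
        (pow_apply_eq_iff π y (i % n) i).2 (Nat.mod_modEq i n)⟩
    · rintro ⟨k, _, rfl⟩; exact ⟨k, rfl⟩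
  rw [hset, Set.ncard_coe_finset, Finset.card_image_of_injOn, Finset.card_range]
  intro a ha b hb hab
  simp only [Finset.coe_range, Set.mem_Iio] at ha hb
  have h := (pow_apply_eq_iff π y a b).1 hab
  unfold Nat.ModEq at h
  rwa [Nat.mod_eq_of_lt ha, Nat.mod_eq_of_lt hb] at h

end Aux

/-- Given `t` cycles of `π` whose lengths are all divisible by `d`, the number
of distinct friezes (partitions of the union of these cycles of the form
`{F₀, F₀π, …, F₀π^{d-1}}` with `F₀` arising from a cross-section) is `d^{t-1}`. -/
theorem stmt8 {Y : Type*} [Fintype Y] (π : Equiv.Perm Y) (d t : ℕ)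
    (hd : 0 < d) (ht : 0 < t) (G : Set (Set Y))
    (hcyc : ∀ C ∈ G, IsCycleOf π C ∧ d ∣ C.ncard) (hcard : G.ncard = t) :
    {P : Set (Set Y) | ∃ E ⊆ ⋃₀ G,
      (∀ C ∈ G, ∃! y, y ∈ E ∩ C) ∧ P = frieze π E d}.ncard = d ^ (t - 1) := by
  classical
  haveI : NeZero d := ⟨hd.ne'⟩
  have hGfin : G.Finite := Set.toFinite G
  -- choose base points of the cycles
  have h1 : ∀ C : ↑G, ∃ y : Y, (C : Set Y) = {x | ∃ i : ℕ, (π ^ i) y = x} :=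
    fun C => (hcyc C.1 C.2).1
  choose y hy using h1
  set n : ↑G → ℕ := fun C => Function.minimalPeriod ⇑π (y C) with hn
  have hnpos : ∀ C, 0 < n C :=
    fun C => Function.minimalPeriod_pos_of_mem_periodicPts (perm_periodic π (y C))
  have hdn : ∀ C : ↑G, d ∣ n C := by
    intro C
    have h := (hcyc C.1 C.2).2
    rwa [hy C, orbit_ncard] at h
  have comp : ∀ (u v : ℕ) (x : Y), (π ^ u) ((π ^ v) x) = (π ^ (u + v)) x :=
    perm_comp_pow π
  have mem_iff : ∀ (C : ↑G) (x : Y), x ∈ (C : Set Y) ↔ ∃ i : ℕ, (π ^ i) (y C) = x := by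
    intro C x
    rw [hy C]
    exact Iff.rfl
  have pow_period : ∀ (C : ↑G) (b k : ℕ), n C ∣ k → (π ^ (b + k)) (y C) = (π ^ b) (y C) := by
    intro C b k hk
    exact (pow_apply_eq_iff π (y C) (b + k) b).2
      (((Nat.modEq_iff_dvd' (Nat.le_add_right b k)).2 (by simpa using hk)).symm)
  -- congruence modulo `d`
  have hcongr : ∀ (C : ↑G) (i j : ℕ),
      (π ^ i) (y C) = (π ^ j) (y C) → (i : ZMod d) = (j : ZMod d) := by
    intro C i j h
    have h2 := (pow_apply_eq_iff π (y C) i j).1 h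
    rw [ZMod.natCast_eq_natCast_iff]
    exact h2.of_dvd (hdn C)
  -- the phase function
  obtain ⟨ph, ph_eq⟩ : ∃ ph : ↑G → Y → ZMod d,
      ∀ (C : ↑G) (i : ℕ), ph C ((π ^ i) (y C)) = (i : ZMod d) := by
    refine ⟨fun C x =>
      if h : ∃ i : ℕ, (π ^ i) (y C) = x then ((h.choose : ℕ) : ZMod d) else 0, ?_⟩
    intro C i
    have hex : ∃ j : ℕ, (π ^ j) (y C) = (π ^ i) (y C) := ⟨i, rfl⟩
    simp only [dif_pos hex]
    exact hcongr C _ i hex.choose_spec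
  have hyph : ∀ C : ↑G, ph C (y C) = 0 := by
    intro C
    have h := ph_eq C 0
    simpa using h
  -- same phase means related by a power of π^d
  have samephase : ∀ (C : ↑G) (a b : ℕ), ((a : ZMod d) = (b : ZMod d)) →
      ∃ q : ℕ, (π ^ (d * q)) ((π ^ a) (y C)) = (π ^ b) (y C) := by
    intro C a b hab
    have hm1 : 1 ≤ n C := hnpos C
    have hdvd : d ∣ b + a * (n C - 1) := by
      have hz : ((b + a * (n C - 1) : ℕ) : ZMod d) = 0 := by
        have hm0 : ((n C : ℕ) : ZMod d) = 0 :=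
          (ZMod.natCast_eq_zero_iff _ _).2 (hdn C)
        have hms : ((n C - 1 : ℕ) : ZMod d) = (n C : ZMod d) - 1 := by
          push_cast [Nat.cast_sub hm1]
          ring
        push_cast [hms, hm0, ← hab]
        ring
      exact (ZMod.natCast_eq_zero_iff _ _).1 hz
    obtain ⟨q, hq⟩ := hdvd
    refine ⟨q, ?_⟩
    rw [comp]
    have he : d * q + a = b + a * n C := by
      have h2 : a * (n C - 1) + a = a * n C := by
        rw [← Nat.mul_succ]
        congr 1
        omega
      omega
    rw [he]
    exact pow_period C b (a * n C) (dvd_mul_left _ _)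
  -- distinct cycles are disjoint
  have orbit_eq : ∀ (C : ↑G) (x : Y), x ∈ (C : Set Y) →
      (C : Set Y) = {w | ∃ i : ℕ, (π ^ i) x = w} := by
    intro C x hx
    obtain ⟨a, rfl⟩ := (mem_iff C x).1 hx
    rw [hy C]
    ext w
    simp only [Set.mem_setOf_eq]
    constructor
    · rintro ⟨i, rfl⟩
      refine ⟨i + a * (n C - 1), ?_⟩
      rw [comp]
      have h2 : i + a * (n C - 1) + a = i + a * n C := by
        have h3 : a * (n C - 1) + a = a * n C := by
          rw [← Nat.mul_succ]
          congr 1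
          have := hnpos C
          omega
        omega
      rw [h2]
      exact pow_period C i (a * n C) (dvd_mul_left _ _)
    · rintro ⟨i, rfl⟩
      exact ⟨i + a, (comp i a _).symm⟩
  have disj : ∀ (C C' : ↑G) (x : Y), x ∈ (C : Set Y) → x ∈ (C' : Set Y) → C = C' := by
    intro C C' x h h'
    exact Subtype.ext (by rw [orbit_eq C x h, orbit_eq C' x h'])
  -- membership in the blocks of a frieze
  have mem_pow : ∀ (C : ↑G) (x : Y), x ∈ (C : Set Y) → ∀ k : ℕ, (π ^ k) x ∈ (C : Set Y) := by
    intro C x hx k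
    rw [orbit_eq C x hx]
    exact ⟨k, rfl⟩
  have blockmem : ∀ (E : Set Y), E ⊆ ⋃₀ G → ∀ eE : ↑G → Y,
      (∀ C : ↑G, eE C ∈ E ∩ (C : Set Y)) → (∀ (C : ↑G) (z : Y), z ∈ E ∩ (C : Set Y) → z = eE C) →
      ∀ (i : ℕ) (x : Y), (x ∈ (fun w => (π ^ i) w) '' F0 π E d ↔
        ∃ C : ↑G, x ∈ (C : Set Y) ∧ ph C x = ph C (eE C) + (i : ZMod d)) := by
    intro E hEsub eE heE huE i x
    constructor
    · rintro ⟨w, ⟨e, he, q, rfl⟩, rfl⟩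
      dsimp only
      obtain ⟨Cs, hCs, heCs⟩ := hEsub he
      have he' : e = eE ⟨Cs, hCs⟩ := huE ⟨Cs, hCs⟩ e ⟨he, heCs⟩
      obtain ⟨a, ha⟩ := (mem_iff ⟨Cs, hCs⟩ e).1 heCs
      refine ⟨⟨Cs, hCs⟩, mem_pow _ _ (mem_pow _ _ heCs (d * q)) i, ?_⟩
      rw [← he', ← ha, comp (d * q) a, comp i (d * q + a), ph_eq, ph_eq]
      push_cast [ZMod.natCast_self]
      ring
    · rintro ⟨C, hxC, hphx⟩
      obtain ⟨a, ha⟩ := (mem_iff C (eE C)).1 (heE C).2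
      obtain ⟨b, hb⟩ := (mem_iff C x).1 hxC
      rw [← hb, ← ha, ph_eq, ph_eq] at hphx
      obtain ⟨q, hq⟩ := samephase C (a + i) b (by push_cast; rw [hphx])
      refine ⟨(π ^ (d * q)) (eE C), ⟨eE C, (heE C).1, q, rfl⟩, ?_⟩
      show (π ^ i) ((π ^ (d * q)) (eE C)) = x
      rw [← hb, ← ha, comp (d * q) a, comp i (d * q + a)]
      have he2 : i + (d * q + a) = d * q + (a + i) := by ring
      rw [he2, ← comp (d * q) (a + i)]
      exact hq
  -- a shift of phases gives an inclusion of friezes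
  have friezesub : ∀ (E E' : Set Y) (eE eE' : ↑G → Y), E ⊆ ⋃₀ G →
      (∀ C : ↑G, eE C ∈ E ∩ (C : Set Y)) → (∀ (C : ↑G) (z : Y), z ∈ E ∩ (C : Set Y) → z = eE C) →
      E' ⊆ ⋃₀ G →
      (∀ C : ↑G, eE' C ∈ E' ∩ (C : Set Y)) → (∀ (C : ↑G) (z : Y), z ∈ E' ∩ (C : Set Y) → z = eE' C) →
      ∀ s : ZMod d, (∀ C : ↑G, ph C (eE' C) = ph C (eE C) + s) →
      frieze π E d ⊆ frieze π E' d := by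
    rintro E E' eE eE' h1' h2' h3' h4' h5' h6' s hs B ⟨i, hi, rfl⟩
    refine ⟨((i : ZMod d) - s).val, ZMod.val_lt _, ?_⟩
    have hv : ((((i : ZMod d) - s).val : ℕ) : ZMod d) = (i : ZMod d) - s := by
      rw [ZMod.natCast_val, ZMod.cast_id]
    ext x
    rw [blockmem E h1' eE h2' h3' i x, blockmem E' h4' eE' h5' h6' _ x]
    constructor
    · rintro ⟨C, hxC, hphx⟩
      exact ⟨C, hxC, by rw [hphx, hs C, hv]; ring⟩
    · rintro ⟨C, hxC, hphx⟩
      exact ⟨C, hxC, by rw [hphx, hs C, hv]; ring⟩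
  -- the standard cross-sections
  have hGne : G.Nonempty := by
    rw [Set.nonempty_iff_ne_empty]
    intro hGe
    rw [hGe, Set.ncard_empty] at hcard
    omega
  obtain ⟨C₀, hC₀⟩ := hGne
  set c₀ : ↑G := ⟨C₀, hC₀⟩ with hc₀
  set mkE : (↑G → ZMod d) → Set Y :=
    fun f => Set.range fun C : ↑G => (π ^ (f C).val) (y C) with hmkE
  have mkE_sub : ∀ f, mkE f ⊆ ⋃₀ G := by
    rintro f x ⟨C, rfl⟩
    exact ⟨C.1, C.2, (mem_iff C _).2 ⟨(f C).val, rfl⟩⟩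
  have mkE_mem : ∀ (f : ↑G → ZMod d) (C : ↑G),
      (π ^ (f C).val) (y C) ∈ mkE f ∩ (C : Set Y) :=
    fun f C => ⟨⟨C, rfl⟩, (mem_iff C _).2 ⟨(f C).val, rfl⟩⟩
  have mkE_uniq : ∀ (f : ↑G → ZMod d) (C : ↑G) (z : Y),
      z ∈ mkE f ∩ (C : Set Y) → z = (π ^ (f C).val) (y C) := by
    rintro f C z ⟨⟨C', rfl⟩, hzC⟩
    have hCC : C' = C := disj C' C _ ((mkE_mem f C').2) hzC
    rw [hCC]
  have mkE_exu : ∀ (f : ↑G → ZMod d), ∀ C ∈ G, ∃! z, z ∈ mkE f ∩ C :=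
    fun f C hC => ⟨_, mkE_mem f ⟨C, hC⟩, fun z hz => mkE_uniq f ⟨C, hC⟩ z hz⟩
  have ph_mkE : ∀ (f : ↑G → ZMod d) (C : ↑G), ph C ((π ^ (f C).val) (y C)) = f C := by
    intro f C
    rw [ph_eq, ZMod.natCast_val, ZMod.cast_id]
  -- the set of friezes is the image of the standard cross-sections
  have hSeq : {P : Set (Set Y) | ∃ E ⊆ ⋃₀ G,
      (∀ C ∈ G, ∃! y, y ∈ E ∩ C) ∧ P = frieze π E d}
      = (fun f => frieze π (mkE f) d) '' {f : ↑G → ZMod d | f c₀ = 0} := by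
    ext P
    simp only [Set.mem_setOf_eq, Set.mem_image]
    constructor
    · rintro ⟨E, hEsub, hEex, rfl⟩
      have hch : ∀ C : ↑G, ∃ z, z ∈ E ∩ (C : Set Y) ∧
          ∀ w, w ∈ E ∩ (C : Set Y) → w = z := by
        intro C
        obtain ⟨z, hz, hu⟩ := hEex C.1 C.2
        exact ⟨z, hz, hu⟩
      choose eE heE huE using hch
      set g : ↑G → ZMod d := fun C => ph C (eE C) - ph c₀ (eE c₀) with hgdef
      have hgC : ∀ C : ↑G, ph C ((π ^ (g C).val) (y C)) = ph C (eE C) - ph c₀ (eE c₀) := by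
        intro C
        rw [ph_mkE g C]
      refine ⟨g, by simp [hgdef], ?_⟩
      show frieze π (mkE g) d = frieze π E d
      apply Set.Subset.antisymm
      · refine friezesub (mkE g) E (fun C => (π ^ (g C).val) (y C)) eE (mkE_sub g)
          (mkE_mem g) (mkE_uniq g) hEsub heE huE (ph c₀ (eE c₀)) ?_
        intro C
        rw [hgC]
        ring
      · refine friezesub E (mkE g) eE (fun C => (π ^ (g C).val) (y C)) hEsub heE huE
          (mkE_sub g) (mkE_mem g) (mkE_uniq g) (- ph c₀ (eE c₀)) ?_
        intro C
        rw [hgC]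
        ring
    · rintro ⟨f, hf0, rfl⟩
      exact ⟨mkE f, mkE_sub f, mkE_exu f, rfl⟩
  -- injectivity
  have hinj : Set.InjOn (fun f => frieze π (mkE f) d) {f : ↑G → ZMod d | f c₀ = 0} := by
    intro f hf g hg hfg
    simp only [Set.mem_setOf_eq] at hf hg
    have hfg' : frieze π (mkE f) d = frieze π (mkE g) d := hfg
    have hy0mem : y c₀ ∈ (c₀ : Set Y) := (mem_iff c₀ _).2 ⟨0, by simp⟩
    have hB : (fun w => (π ^ 0) w) '' F0 π (mkE f) d ∈ frieze π (mkE g) d := by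
      rw [← hfg']
      exact ⟨0, hd, rfl⟩
    obtain ⟨j, hjd, hBj⟩ := hB
    -- the block contains y c₀
    have hy0B : y c₀ ∈ (fun w => (π ^ 0) w) '' F0 π (mkE f) d := by
      rw [blockmem (mkE f) (mkE_sub f) _ (mkE_mem f) (mkE_uniq f) 0 (y c₀)]
      exact ⟨c₀, hy0mem, by rw [hyph, ph_mkE, hf]; simp⟩
    have hj0 : (j : ZMod d) = 0 := by
      rw [hBj] at hy0B
      rw [blockmem (mkE g) (mkE_sub g) _ (mkE_mem g) (mkE_uniq g) j (y c₀)] at hy0B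
      obtain ⟨C', hC', hph'⟩ := hy0B
      have hCC : C' = c₀ := disj C' c₀ _ hC' hy0mem
      subst hCC
      rw [hyph, ph_mkE, hg] at hph'
      rw [zero_add] at hph'
      exact hph'.symm
    funext C
    have heB : (π ^ (f C).val) (y C) ∈ (fun w => (π ^ 0) w) '' F0 π (mkE f) d := by
      rw [blockmem (mkE f) (mkE_sub f) _ (mkE_mem f) (mkE_uniq f) 0 _]
      exact ⟨C, (mkE_mem f C).2, by rw [ph_mkE]; simp⟩
    rw [hBj] at heB
    rw [blockmem (mkE g) (mkE_sub g) _ (mkE_mem g) (mkE_uniq g) j _] at heB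
    obtain ⟨C'', hC'', hph''⟩ := heB
    have hCC : C'' = C := disj C'' C _ hC'' ((mkE_mem f C).2)
    subst hCC
    rw [ph_mkE, ph_mkE, hj0, add_zero] at hph''
    exact hph''
  -- count
  rw [hSeq, Set.ncard_image_of_injOn hinj]
  haveI : Fintype ↑G := hGfin.fintype
  have hcardG : Fintype.card ↑G = t := by
    rw [← Nat.card_eq_fintype_card, Nat.card_coe_set_eq, hcard]
  have e : ↑{f : ↑G → ZMod d | f c₀ = 0} ≃ ({C : ↑G // ¬ C = c₀} → ZMod d) :=
    { toFun := fun F C => F.1 C.1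
      invFun := fun g => ⟨fun C => if h : C = c₀ then 0 else g ⟨C, h⟩, by simp⟩
      left_inv := by
        intro F
        apply Subtype.ext
        funext C
        by_cases h : C = c₀
        · subst h
          simpa using F.2.symm
        · simp [h]
      right_inv := by
        intro g
        funext C
        simp [C.2] }
  rw [← Nat.card_coe_set_eq, Nat.card_congr e, Nat.card_fun, Nat.card_zmod,
    Nat.card_eq_fintype_card, Fintype.card_subtype_compl, hcardG,
    Fintype.card_subtype_eq]
end

section
/- Every partial partition P of a finite set Y that is fixed (as a partition, blockwise permuted) by a permutation π of Y is a disjoint union of friezes: there exist a partial partition {G_α} of the set of cycles of π, divisors d_α of the lengths of the cycles in G_α, and cross-sections E_α, such that P is the union over α of the frieze on ⋃G_α determined by E_α and d_α. -/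
set_option linter.unusedSectionVars false
set_option linter.unusedVariables false

namespace Stmt9x
open Classical
variable {Y : Type*} [Fintype Y] (π : Equiv.Perm Y)

def cyc (y : Y) : Set Y := {x | ∃ i : ℕ, (π ^ i) y = x}

lemma mem_cyc_self (y : Y) : y ∈ cyc π y := ⟨0, rfl⟩

lemma pow_mem_cyc (y : Y) (i : ℕ) : (π ^ i) y ∈ cyc π y := ⟨i, rfl⟩

lemma cyc_symm {x y : Y} (h : x ∈ cyc π y) : y ∈ cyc π x := by
  obtain ⟨i, rfl⟩ := h
  obtain ⟨m, hm⟩ : ∃ m, orderOf π = m + 1 :=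
    ⟨orderOf π - 1, (Nat.succ_pred_eq_of_pos (orderOf_pos π)).symm⟩
  refine ⟨i * m, ?_⟩
  have h1 : (π ^ (i * m)) ((π ^ i) y) = (π ^ (i * (m + 1))) y := by
    rw [← Equiv.Perm.mul_apply, ← pow_add]
    ring_nf
  rw [h1, mul_comm, pow_mul, ← hm, pow_orderOf_eq_one, one_pow, Equiv.Perm.one_apply]

lemma cyc_trans {x y z : Y} (h : x ∈ cyc π y) (h2 : z ∈ cyc π x) : z ∈ cyc π y := by
  obtain ⟨i, rfl⟩ := h; obtain ⟨j, rfl⟩ := h2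
  exact ⟨j + i, by rw [pow_add, Equiv.Perm.mul_apply]⟩

lemma cyc_eq {x y : Y} (h : x ∈ cyc π y) : cyc π x = cyc π y :=
  Set.ext fun z => ⟨fun hz => cyc_trans π h hz, fun hz => cyc_trans π (cyc_symm π h) hz⟩

lemma isCycleOf_cyc (y : Y) : IsCycleOf π (cyc π y) := ⟨y, rfl⟩

lemma cyc_eq_of_isCycleOf {C : Set Y} (hC : IsCycleOf π C) {x : Y} (hx : x ∈ C) :
    cyc π x = C := by
  obtain ⟨z, rfl⟩ := hC
  exact cyc_eq π hx

lemma isPeriodic (y : Y) : Function.IsPeriodicPt (⇑π) (orderOf π) y := by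
  show (⇑π)^[orderOf π] y = y
  rw [Equiv.Perm.iterate_eq_pow, pow_orderOf_eq_one, Equiv.Perm.one_apply]

lemma minPer_pos (y : Y) : 0 < Function.minimalPeriod (⇑π) y :=
  (isPeriodic π y).minimalPeriod_pos (orderOf_pos π)

lemma pow_minPer (y : Y) : (π ^ (Function.minimalPeriod (⇑π) y)) y = y := by
  rw [← Equiv.Perm.iterate_eq_pow]
  exact Function.iterate_minimalPeriod

lemma ncard_cyc (y : Y) : (cyc π y).ncard = Function.minimalPeriod (⇑π) y := by
  set n := Function.minimalPeriod (⇑π) y with hn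
  have hpos : 0 < n := minPer_pos π y
  have key : cyc π y = ↑(Finset.image (fun i : Fin n => (π ^ (i : ℕ)) y) Finset.univ) := by
    ext x
    simp only [Finset.coe_image, Finset.coe_univ, Set.image_univ, Set.mem_range]
    constructor
    · rintro ⟨i, rfl⟩
      refine ⟨⟨i % n, Nat.mod_lt _ hpos⟩, ?_⟩
      show (π ^ (i % n)) y = (π ^ i) y
      rw [← Equiv.Perm.iterate_eq_pow, ← Equiv.Perm.iterate_eq_pow]
      exact Function.iterate_mod_minimalPeriod_eq
    · rintro ⟨i, rfl⟩; exact ⟨i, rfl⟩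
  rw [key, Set.ncard_coe_finset, Finset.card_image_of_injective _ ?_, Finset.card_univ,
    Fintype.card_fin]
  intro i j hij
  have : (⇑π)^[(i : ℕ)] y = (⇑π)^[(j : ℕ)] y := by
    rw [Equiv.Perm.iterate_eq_pow, Equiv.Perm.iterate_eq_pow]; exact hij
  exact Fin.ext ((Function.iterate_eq_iterate_iff_of_lt_minimalPeriod i.2 j.2).mp this)

/-! ## Block lemmas -/

lemma img_add (a b : ℕ) (B : Set Y) :
    ⇑(π ^ (a + b)) '' B = ⇑(π ^ a) '' (⇑(π ^ b) '' B) := by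
  rw [pow_add, Equiv.Perm.coe_mul, Set.image_comp]

section Blocks
variable {π} {P : Set (Set Y)}
    (hne : ∀ B ∈ P, B.Nonempty) (hdisj : P.PairwiseDisjoint id)
    (hfix : {B' | ∃ B ∈ P, B' = (fun y => π y) '' B} = P)

lemma img_mem (hfix : {B' | ∃ B ∈ P, B' = (fun y => π y) '' B} = P)
    {B : Set Y} (hB : B ∈ P) (i : ℕ) : ⇑(π ^ i) '' B ∈ P := by
  induction i with
  | zero => simpa using hB
  | succ n ih =>
      have : ⇑(π ^ (n + 1)) '' B = (fun y => π y) '' (⇑(π ^ n) '' B) := by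
        rw [add_comm, img_add]; rfl
      rw [this, ← hfix]
      exact ⟨_, ih, rfl⟩

lemma eq_of_mem_inter (hdisj : P.PairwiseDisjoint id) {B B' : Set Y}
    (hB : B ∈ P) (hB' : B' ∈ P) {x : Y} (hx : x ∈ B) (hx' : x ∈ B') : B = B' := by
  by_contra hne'
  exact Set.disjoint_left.mp (hdisj hB hB' hne') hx hx'

/-- the period of a block -/
noncomputable def dB (π : Equiv.Perm Y) (B : Set Y) : ℕ :=
  Nat.find (⟨orderOf π, orderOf_pos π, by simp [pow_orderOf_eq_one]⟩ :
    ∃ i, 0 < i ∧ ⇑(π ^ i) '' B = B)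

lemma dB_pos (B : Set Y) : 0 < dB π B ∧ ⇑(π ^ dB π B) '' B = B :=
  Nat.find_spec (⟨orderOf π, orderOf_pos π, by simp [pow_orderOf_eq_one]⟩ :
    ∃ i, 0 < i ∧ ⇑(π ^ i) '' B = B)

lemma img_dvd {B : Set Y} {i : ℕ} (h : dB π B ∣ i) : ⇑(π ^ i) '' B = B := by
  obtain ⟨q, rfl⟩ := h
  induction q with
  | zero => simp
  | succ n ih =>
      rw [Nat.mul_succ, img_add, (dB_pos B).2, ih]

lemma dvd_of_img {B : Set Y} {i : ℕ} (h : ⇑(π ^ i) '' B = B) : dB π B ∣ i := by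
  have h0 : i % dB π B + dB π B * (i / dB π B) = i := Nat.mod_add_div i (dB π B)
  have hr : ⇑(π ^ (i % dB π B)) '' B = B := by
    calc ⇑(π ^ (i % dB π B)) '' B = ⇑(π ^ (i % dB π B)) '' (⇑(π ^ (dB π B * (i / dB π B))) '' B) := by
          rw [img_dvd (Dvd.intro _ rfl)]
      _ = ⇑(π ^ i) '' B := by rw [← img_add, h0]
      _ = B := h
  have hlt : i % dB π B < dB π B := Nat.mod_lt _ (dB_pos (π := π) B).1
  have := Nat.find_min (⟨orderOf π, orderOf_pos π, by simp [pow_orderOf_eq_one]⟩ :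
    ∃ i, 0 < i ∧ ⇑(π ^ i) '' B = B) hlt
  push_neg at this
  rcases Nat.eq_zero_or_pos (i % dB π B) with h' | h'
  · exact Nat.dvd_of_mod_eq_zero h'
  · exact absurd hr (this h')

end Blocks
/-! ## Cross sections and groups of cycles -/

noncomputable def pickS (S : Set Y) (x : Y) : Y := if h : S.Nonempty then h.choose else x

lemma pickS_eq {S : Set Y} (h : S.Nonempty) (x : Y) : pickS S x = h.choose := dif_pos h

noncomputable def EB (π : Equiv.Perm Y) (B : Set Y) : Set Y :=
  {x | x ∈ B ∧ pickS (cyc π x ∩ B) x = x}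

def Gb (π : Equiv.Perm Y) (B : Set Y) : Set (Set Y) :=
  {C | IsCycleOf π C ∧ (C ∩ B).Nonempty}

lemma Gb_img (i : ℕ) (B : Set Y) : Gb π (⇑(π ^ i) '' B) = Gb π B := by
  ext C
  simp only [Gb, Set.mem_setOf_eq, and_congr_right_iff]
  intro hC
  constructor
  · rintro ⟨z, hzC, x', hx'B, rfl⟩
    refine ⟨x', ?_, hx'B⟩
    rw [← cyc_eq_of_isCycleOf π hC hzC]
    exact cyc_symm π ⟨i, rfl⟩
  · rintro ⟨x, hxC, hxB⟩
    refine ⟨(π ^ i) x, ?_, ⟨x, hxB, rfl⟩⟩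
    rw [← cyc_eq_of_isCycleOf π hC hxC]
    exact pow_mem_cyc π x i

section Blocks2
variable {π : Equiv.Perm Y} {P : Set (Set Y)}

lemma exu_cross (hdisj : P.PairwiseDisjoint id) {B : Set Y} (hB : B ∈ P)
    {C : Set Y} (hC : C ∈ Gb π B) : ∃! y, y ∈ EB π B ∩ C := by
  obtain ⟨hCyc, hSne⟩ := hC
  have hyS : hSne.choose ∈ C ∩ B := hSne.choose_spec
  have hcy : cyc π hSne.choose = C := cyc_eq_of_isCycleOf π hCyc hyS.1
  refine ⟨hSne.choose, ⟨⟨hyS.2, ?_⟩, hyS.1⟩, ?_⟩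
  · rw [hcy, pickS_eq hSne]
  · rintro y' ⟨⟨hy'B, hp⟩, hy'C⟩
    rw [cyc_eq_of_isCycleOf π hCyc hy'C, pickS_eq hSne] at hp
    exact hp.symm

lemma F0_EB (hdisj : P.PairwiseDisjoint id)
    (hfix : {B' | ∃ B ∈ P, B' = (fun y => π y) '' B} = P)
    {B : Set Y} (hB : B ∈ P) : F0 π (EB π B) (dB π B) = B := by
  ext x
  constructor
  · rintro ⟨y, ⟨hyB, _⟩, q, rfl⟩
    have h1 : ⇑(π ^ (dB π B * q)) '' B = B := img_dvd ⟨q, rfl⟩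
    have h2 : (π ^ (dB π B * q)) y ∈ ⇑(π ^ (dB π B * q)) '' B := ⟨y, hyB, rfl⟩
    rwa [h1] at h2
  · intro hx
    have hSne : (cyc π x ∩ B).Nonempty := ⟨x, mem_cyc_self π x, hx⟩
    have hyS : hSne.choose ∈ cyc π x ∩ B := hSne.choose_spec
    have hcy : cyc π hSne.choose = cyc π x := cyc_eq π hyS.1
    have hyE : hSne.choose ∈ EB π B := ⟨hyS.2, by rw [hcy, pickS_eq hSne]⟩
    obtain ⟨i, hi⟩ : x ∈ cyc π hSne.choose := cyc_symm π hyS.1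
    have hdvd : dB π B ∣ i := by
      apply dvd_of_img (π := π)
      exact eq_of_mem_inter hdisj (img_mem hfix hB i) hB
        ⟨hSne.choose, hyS.2, hi⟩ (hi ▸ hx)
    obtain ⟨q, rfl⟩ := hdvd
    exact ⟨hSne.choose, hyE, q, hi⟩

lemma orbit_of_shared (hdisj : P.PairwiseDisjoint id)
    (hfix : {B' | ∃ B ∈ P, B' = (fun y => π y) '' B} = P)
    {B B' : Set Y} (hB : B ∈ P) (hB' : B' ∈ P)
    {C : Set Y} (hC : IsCycleOf π C) (h1 : (C ∩ B).Nonempty) (h2 : (C ∩ B').Nonempty) :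
    ∃ i, ⇑(π ^ i) '' B = B' := by
  obtain ⟨x, hxC, hxB⟩ := h1
  obtain ⟨z, hzC, hzB⟩ := h2
  obtain ⟨i, rfl⟩ : z ∈ cyc π x := (cyc_eq_of_isCycleOf π hC hxC).symm ▸ hzC
  exact ⟨i, eq_of_mem_inter hdisj (img_mem hfix hB i) hB' ⟨x, hxB, rfl⟩ hzB⟩

lemma d_dvd_ncard (hdisj : P.PairwiseDisjoint id)
    (hfix : {B' | ∃ B ∈ P, B' = (fun y => π y) '' B} = P)
    {B : Set Y} (hB : B ∈ P) {C : Set Y} (hC : C ∈ Gb π B) : dB π B ∣ C.ncard := by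
  obtain ⟨hCyc, x, hxC, hxB⟩ := hC
  rw [← cyc_eq_of_isCycleOf π hCyc hxC, ncard_cyc]
  apply dvd_of_img (π := π)
  exact eq_of_mem_inter hdisj (img_mem hfix hB _) hB
    ⟨x, hxB, pow_minPer π x⟩ hxB

end Blocks2
end Stmt9x

open Stmt9x

/-- Every partial partition of `Y` fixed (blockwise) by a permutation `π` is a
disjoint union of friezes: there are a partial partition `𝒢` of the cycles of
`π`, moduli `d_α` dividing the lengths of the cycles in each group, and
cross-sections `E_α`, such that `P` is the union of the corresponding friezes. -/
theorem stmt9 {Y : Type*} [Fintype Y] (π : Equiv.Perm Y) (P : Set (Set Y))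
    (hne : ∀ B ∈ P, B.Nonempty) (hdisj : P.PairwiseDisjoint id)
    (hfix : {B' | ∃ B ∈ P, B' = (fun y => π y) '' B} = P) :
    ∃ (𝒢 : Set (Set (Set Y))) (dfun : Set (Set Y) → ℕ) (Efun : Set (Set Y) → Set Y),
      (∀ G ∈ 𝒢, G.Nonempty ∧ 0 < dfun G ∧
        (∀ C ∈ G, IsCycleOf π C ∧ dfun G ∣ C.ncard) ∧
        Efun G ⊆ ⋃₀ G ∧ (∀ C ∈ G, ∃! y, y ∈ Efun G ∩ C)) ∧
      𝒢.PairwiseDisjoint id ∧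
      P = ⋃ G ∈ 𝒢, frieze π (Efun G) (dfun G) := by
  classical
  set 𝒢 : Set (Set (Set Y)) := {G | ∃ B ∈ P, Gb π B = G} with h𝒢
  set repB : Set (Set Y) → Set Y :=
    fun G => if h : ∃ B ∈ P, Gb π B = G then h.choose else ∅ with hrepB
  have hrepP : ∀ G ∈ 𝒢, repB G ∈ P ∧ Gb π (repB G) = G := by
    intro G hG
    have hG' : ∃ B ∈ P, Gb π B = G := hG
    simp only [hrepB, dif_pos hG']
    exact ⟨hG'.choose_spec.1, hG'.choose_spec.2⟩
  refine ⟨𝒢, fun G => dB π (repB G), fun G => EB π (repB G), ?_, ?_, ?_⟩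
  · intro G hG
    obtain ⟨hB0P, hGb0⟩ := hrepP G hG
    obtain ⟨y0, hy0⟩ := hne _ hB0P
    refine ⟨⟨cyc π y0, ?_⟩, (dB_pos (π := π) (repB G)).1, fun C hC => ?_, ?_, fun C hC => ?_⟩
    · rw [← hGb0]; exact ⟨isCycleOf_cyc π y0, y0, mem_cyc_self π y0, hy0⟩
    · rw [← hGb0] at hC
      exact ⟨hC.1, d_dvd_ncard hdisj hfix hB0P hC⟩
    · intro x hx
      refine ⟨cyc π x, ?_, mem_cyc_self π x⟩
      rw [← hGb0]
      exact ⟨isCycleOf_cyc π x, x, mem_cyc_self π x, hx.1⟩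
    · rw [← hGb0] at hC
      exact exu_cross hdisj hB0P hC
  · rintro G ⟨B, hB, rfl⟩ G' ⟨B', hB', rfl⟩ hne'
    rw [Function.onFun, Set.disjoint_left]
    intro C hC hC'
    obtain ⟨i, hi⟩ := orbit_of_shared hdisj hfix hB hB' hC.1 hC.2 hC'.2
    exact hne' (by rw [← hi, Gb_img])
  · apply subset_antisymm
    · intro B hB
      have hG : Gb π B ∈ 𝒢 := ⟨B, hB, rfl⟩
      obtain ⟨hB0P, hGb0⟩ := hrepP _ hG
      obtain ⟨y, hy⟩ := hne B hB
      have hCy : (cyc π y ∩ B).Nonempty := ⟨y, mem_cyc_self π y, hy⟩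
      have hCy0 : (cyc π y ∩ repB (Gb π B)).Nonempty := by
        have h1 : cyc π y ∈ Gb π (repB (Gb π B)) := by
          rw [hGb0]; exact ⟨isCycleOf_cyc π y, hCy⟩
        exact h1.2
      obtain ⟨i, hi⟩ := orbit_of_shared hdisj hfix hB0P hB (isCycleOf_cyc π y) hCy0 hCy
      set d := dB π (repB (Gb π B)) with hd'
      have hd : 0 < d := (dB_pos (π := π) _).1
      have hB' : ⇑(π ^ (i % d)) '' repB (Gb π B) = B := by
        have h2 : ⇑(π ^ (i % d + d * (i / d))) '' repB (Gb π B) = B := by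
          rw [Nat.mod_add_div]; exact hi
        rwa [img_add, img_dvd ⟨_, rfl⟩] at h2
      refine Set.mem_biUnion hG ?_
      exact ⟨i % d, Nat.mod_lt _ hd, by
        rw [F0_EB hdisj hfix hB0P]; exact hB'.symm⟩
    · intro X hX
      simp only [Set.mem_iUnion] at hX
      obtain ⟨G, hG, hXf⟩ := hX
      obtain ⟨hB0P, hGb0⟩ := hrepP G hG
      obtain ⟨j, hj, rfl⟩ := hXf
      rw [F0_EB hdisj hfix hB0P]
      exact img_mem hfix hB0P j
end

section
/- Let π be a permutation of X and Γ = {(x,y)π^i : 0 ≤ i < s} a cycle of length s of the coordinatewise action of π on X × X, with Γ not contained in the diagonal. Then Γ is symmetric (closed under the twist (x,y) ↦ (y,x)) if and only if s is even and Γ = {(x, xπ^{s/2})π^i : 0 ≤ i < s} for some x lying in a cycle of π of length s. -/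
/-!
If the twist preserves the orbit `Γ` of `(x, y)`, then `(y, x) = (x, y)π^k` for some `k`, so `π^k`
exchanges `x` and `y`. The period `n` of `x` then divides `2k` but not `k` (as `x ≠ y`), which
forces `2 (k mod n) = n`: hence `n` is even and `y = xπ^{n/2}`. Since `y` lies in the cycle of `x`,
`|Γ| = lcm(n, n) = n`. Conversely, on the orbit of `(x₀, x₀π^t)` with `x₀π^{2t} = x₀`, the twist
acts as `π^t`.
-/

namespace Function

variable {α : Type*} {f : α → α} {x y : α}

theorem ncard_setOf_iterate_eq_minimalPeriod (hx : x ∈ periodicPts f) :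
    {z | ∃ n, f^[n] x = z}.ncard = minimalPeriod f x := by
  have h : {z | ∃ n, f^[n] x = z} = (f^[·] x) '' Set.Iio (minimalPeriod f x) := by
    ext z
    constructor
    · rintro ⟨n, rfl⟩
      exact ⟨n % minimalPeriod f x, Nat.mod_lt _ (minimalPeriod_pos_of_mem_periodicPts hx),
        iterate_mod_minimalPeriod_eq⟩
    · rintro ⟨n, -, rfl⟩
      exact ⟨n, rfl⟩
  rw [h, iterate_injOn_Iio_minimalPeriod.ncard_image, ← Finset.coe_range, Set.ncard_coe_finset,
    Finset.card_range]

theorem exists_minimalPeriod_eq_two_mul_of_iterate_swap (hx : x ∈ periodicPts f) (hxy : x ≠ y)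
    {k : ℕ} (hkx : f^[k] x = y) (hky : f^[k] y = x) :
    ∃ r, minimalPeriod f x = 2 * r ∧ f^[r] x = y := by
  set n := minimalPeriod f x
  have h2k : n ∣ 2 * k := IsPeriodicPt.minimalPeriod_dvd <| by
    rw [IsPeriodicPt, IsFixedPt, two_mul, iterate_add_apply, hkx, hky]
  have hn_ndvd : ¬n ∣ k := fun h ↦ hxy (hkx ▸ (isPeriodicPt_iff_minimalPeriod_dvd.2 h).eq.symm)
  have hn : 0 < n := minimalPeriod_pos_of_mem_periodicPts hx
  have h2r : n ∣ 2 * (k % n) := by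
    have hsplit : 2 * k = n * (2 * (k / n)) + 2 * (k % n) := by linarith [Nat.div_add_mod k n]
    exact (Nat.dvd_add_right (dvd_mul_right n _)).1 (hsplit ▸ h2k)
  refine ⟨k % n, (Nat.eq_of_dvd_of_lt_two_mul ?_ h2r ?_).symm,
    iterate_mod_minimalPeriod_eq.trans hkx⟩
  · have : k % n ≠ 0 := fun h ↦ hn_ndvd (Nat.dvd_of_mod_eq_zero h)
    omega
  · have := Nat.mod_lt k hn
    omega

end Function

namespace Equiv.Perm

variable {α β : Type*}

theorem prodCongr_pow (π : Perm α) (σ : Perm β) (n : ℕ) :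
    prodCongr π σ ^ n = prodCongr (π ^ n) (σ ^ n) := by
  ext p <;> simp [coe_pow, Prod.map_iterate]

theorem ncard_setOf_pow_apply_eq_minimalPeriod [Finite α] (π : Perm α) (x : α) :
    {z | ∃ n : ℕ, (π ^ n) x = z}.ncard = Function.minimalPeriod π x := by
  simpa only [coe_pow] using
    Function.ncard_setOf_iterate_eq_minimalPeriod (π.injective.mem_periodicPts x)

theorem swap_mem_setOf_prodCongr_pow_apply {π : Perm α} {x : α} {t : ℕ}
    (hx : (π ^ (2 * t)) x = x) {p : α × α}
    (hp : p ∈ {p | ∃ i : ℕ, (prodCongr π π ^ i) (x, (π ^ t) x) = p}) :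
    p.swap ∈ {p | ∃ i : ℕ, (prodCongr π π ^ i) (x, (π ^ t) x) = p} := by
  obtain ⟨i, rfl⟩ := hp
  refine ⟨i + t, ?_⟩
  simp only [prodCongr_pow, prodCongr_apply, Prod.map, Prod.swap_prod_mk, ← mul_apply, ← pow_add]
  rw [add_assoc, ← two_mul, pow_add π i (2 * t), mul_apply, hx]

end Equiv.Perm

/-- A non-diagonal cycle `Γ` of length `s` of the coordinatewise action of `π`
on `X × X` is symmetric (closed under the twist) iff `s` is even and
`Γ = {(x₀, x₀π^{s/2})π^i : 0 ≤ i < s}` for some `x₀` lying in a cycle of `π`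
of length `s`. -/
theorem stmt11 {X : Type*} [Fintype X] (π : Equiv.Perm X) (x y : X) (s : ℕ)
    (Γ : Set (X × X))
    (hΓ : Γ = {p | ∃ i : ℕ, ((Equiv.prodCongr π π) ^ i) (x, y) = p})
    (hs : Γ.ncard = s)
    (hnd : ¬Γ ⊆ {p : X × X | p.1 = p.2}) :
    (∀ p ∈ Γ, (p.2, p.1) ∈ Γ) ↔
      (Even s ∧ ∃ x₀ : X, ({z | ∃ i : ℕ, (π ^ i) x₀ = z}).ncard = s ∧
        Γ = {p | ∃ i : ℕ, ((Equiv.prodCongr π π) ^ i) (x₀, (π ^ (s / 2)) x₀) = p}) := by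
  have hs_lcm : s = (Function.minimalPeriod π x).lcm (Function.minimalPeriod π y) := by
    rw [← hs, hΓ, Equiv.Perm.ncard_setOf_pow_apply_eq_minimalPeriod]
    exact Function.minimalPeriod_prodMap π π (x, y)
  constructor
  · intro hsym
    have hyx := hsym (x, y) (hΓ ▸ ⟨0, rfl⟩)
    rw [hΓ] at hyx
    obtain ⟨k, hk⟩ := hyx
    simp only [Equiv.Perm.prodCongr_pow, Equiv.prodCongr_apply, Prod.map, Prod.mk.injEq,
      Equiv.Perm.coe_pow] at hk
    have hxy : x ≠ y := by
      rintro rfl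
      refine hnd (hΓ ▸ ?_)
      rintro p ⟨i, rfl⟩
      simp [Equiv.Perm.prodCongr_pow]
    have hx := π.injective.mem_periodicPts x
    obtain ⟨r, hr, hrx⟩ :=
      Function.exists_minimalPeriod_eq_two_mul_of_iterate_swap hx hxy hk.1 hk.2
    have hs_eq : s = 2 * r := by
      rw [hs_lcm, ← hk.1, Function.minimalPeriod_apply_iterate hx, Nat.lcm_self, hr]
    refine ⟨⟨r, by omega⟩, x, ?_, ?_⟩
    · rw [Equiv.Perm.ncard_setOf_pow_apply_eq_minimalPeriod, hr, hs_eq]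
    · rw [hΓ, hs_eq, Nat.mul_div_cancel_left r two_pos, Equiv.Perm.coe_pow, hrx]
  · rintro ⟨hs_even, x₀, hx₀, rfl⟩ p hp
    rw [Equiv.Perm.ncard_setOf_pow_apply_eq_minimalPeriod] at hx₀
    refine Equiv.Perm.swap_mem_setOf_prodCongr_pow_apply ?_ hp
    rw [Nat.two_mul_div_two_of_even hs_even, ← hx₀, Equiv.Perm.coe_pow,
      Function.iterate_minimalPeriod]
end

section
/- Let π be a permutation of X acting coordinatewise on X × X, and call an orbit Γ of π² on X × X singular if Γπτ = Γ, where τ is the twist. Then: each cycle of π on X of odd length contributes exactly one singular orbit, which lies in the diagonal; each cycle of π of length ≡ 2 (mod 4) contributes exactly two singular orbits (neither diagonal); and cycles of length ≡ 0 (mod 4) contribute none. There are no other singular orbits. -/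
/-- The image `Γπτ` of a subset `Γ ⊆ X × X` under `πτ`. -/
def twistPi {X : Type*} (π : Equiv.Perm X) (Γ : Set (X × X)) : Set (X × X) :=
  (fun p : X × X => (π p.2, π p.1)) '' Γ

namespace S12

open Function Set

/-! ### ZMod helper lemmas -/

lemma odd_exists_half {n : ℕ} (hodd : Odd n) (c : ZMod n) : ∃ s : ZMod n, 2 * s = c := by
  obtain ⟨k, hk⟩ := hodd
  refine ⟨↑((n+1)/2) * c, ?_⟩
  have h2 : 2 * ((n+1)/2) = n + 1 := by omega
  rw [← mul_assoc]
  have : (2 : ZMod n) * ↑((n+1)/2) = 1 := by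
    have := congrArg (Nat.cast : ℕ → ZMod n) h2
    push_cast at this
    rwa [ZMod.natCast_self, zero_add] at this
  rw [this, one_mul]

lemma odd_two_mul_cancel {n : ℕ} (hodd : Odd n) {x z : ZMod n} (h : 2 * x = 2 * z) : x = z := by
  obtain ⟨h2, hh⟩ := odd_exists_half hodd 1
  calc x = (2 * h2) * x := by rw [hh, one_mul]
    _ = h2 * (2 * x) := by ring
    _ = h2 * (2 * z) := by rw [h]
    _ = (2 * h2) * z := by ring
    _ = z := by rw [hh, one_mul]

lemma even_exists_two_mul_iff {n : ℕ} [NeZero n] (hdvd : (2:ℕ) ∣ n) (c : ZMod n) :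
    (∃ s : ZMod n, 2 * s = c) ↔ (ZMod.castHom hdvd (ZMod 2)) c = 0 := by
  constructor
  · rintro ⟨s, rfl⟩
    rw [map_mul]
    have h2 : (ZMod.castHom hdvd (ZMod 2)) (2 : ZMod n) = 0 := by
      have h3 : (2 : ZMod n) = ((2:ℕ) : ZMod n) := by push_cast; ring
      rw [h3, map_natCast]
      decide
    rw [h2, zero_mul]
  · intro h
    have hc : c = ↑c.val := (ZMod.natCast_rightInverse c).symm
    rw [hc, map_natCast] at h
    have : (2:ℕ) ∣ c.val := by
      rwa [ZMod.natCast_eq_zero_iff] at h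
    obtain ⟨w, hw⟩ := this
    refine ⟨↑w, ?_⟩
    rw [hc, hw]; push_cast; ring

lemma even_two_mul_eq_zero {n : ℕ} [NeZero n] (hdvd : (2:ℕ) ∣ n) {x : ZMod n}
    (h : 2 * x = 0) : x = 0 ∨ x = ↑(n/2) := by
  have hx : (↑(2 * x.val) : ZMod n) = 0 := by
    push_cast
    rw [ZMod.natCast_rightInverse x]
    exact h
  rw [ZMod.natCast_eq_zero_iff] at hx
  obtain ⟨k, hk⟩ := hx
  have hlt : x.val < n := ZMod.val_lt x
  have hn : 0 < n := Nat.pos_of_ne_zero (NeZero.ne n)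
  have hkb : k < 2 := by
    by_contra hkb
    have h2 : n * 2 ≤ n * k := Nat.mul_le_mul_left n (by omega)
    omega
  interval_cases k
  · left
    have : x.val = 0 := by omega
    rw [← ZMod.natCast_rightInverse x, this, Nat.cast_zero]
  · right
    have : x.val = n / 2 := by omega
    rw [← ZMod.natCast_rightInverse x, this]

/-! ### Generic orbit lemmas -/

variable {X : Type*} [Fintype X]

def Orb (σ : Equiv.Perm X) (y : X) : Set X := {x | ∃ i : ℕ, (σ ^ i) y = x}

lemma isCycleOf_orb (σ : Equiv.Perm X) (y : X) : IsCycleOf σ (Orb σ y) := ⟨y, rfl⟩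

omit [Fintype X] in
lemma mem_orb_self (σ : Equiv.Perm X) (y : X) : y ∈ Orb σ y := ⟨0, rfl⟩

lemma orb_mem_symm {σ : Equiv.Perm X} {y x : X} (h : x ∈ Orb σ y) : y ∈ Orb σ x := by
  obtain ⟨i, rfl⟩ := h
  refine ⟨i * (orderOf σ - 1), ?_⟩
  rw [← Equiv.Perm.mul_apply, ← pow_add]
  have h1 : 1 ≤ orderOf σ := orderOf_pos σ
  have h2 : i * (orderOf σ - 1) + i = i * orderOf σ := by
    obtain ⟨k, hk⟩ := Nat.exists_eq_add_of_le h1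
    rw [hk, Nat.add_sub_cancel_left]; ring
  rw [h2, pow_mul', pow_orderOf_eq_one, one_pow, Equiv.Perm.one_apply]

omit [Fintype X] in
lemma orb_subset {σ : Equiv.Perm X} {y x : X} (h : x ∈ Orb σ y) : Orb σ x ⊆ Orb σ y := by
  obtain ⟨i, rfl⟩ := h
  rintro z ⟨j, rfl⟩
  exact ⟨j + i, by rw [pow_add, Equiv.Perm.mul_apply]⟩

lemma orb_eq {σ : Equiv.Perm X} {y x : X} (h : x ∈ Orb σ y) : Orb σ x = Orb σ y :=
  subset_antisymm (orb_subset h) (orb_subset (orb_mem_symm h))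

lemma orb_eq_iff {σ : Equiv.Perm X} {y x : X} : Orb σ x = Orb σ y ↔ x ∈ Orb σ y := by
  constructor
  · intro h; rw [← h]; exact mem_orb_self σ x
  · exact orb_eq

/-! ### Parametrizing a cycle -/

noncomputable def per (π : Equiv.Perm X) (y : X) : ℕ := Function.minimalPeriod ⇑π y

lemma per_pos (π : Equiv.Perm X) (y : X) : 0 < per π y := by
  have h : IsPeriodicPt ⇑π (orderOf π) y := by
    unfold IsPeriodicPt IsFixedPt
    rw [← Equiv.Perm.coe_pow, pow_orderOf_eq_one]; rfl
  exact h.minimalPeriod_pos (orderOf_pos π)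

instance (π : Equiv.Perm X) (y : X) : NeZero (per π y) := ⟨(per_pos π y).ne'⟩

noncomputable def pt (π : Equiv.Perm X) (y : X) (i : ZMod (per π y)) : X :=
  (π ^ i.val) y

lemma pow_cast (π : Equiv.Perm X) (y : X) (a : ℕ) : (π ^ a) y = pt π y ↑a := by
  unfold pt
  rw [ZMod.val_natCast, Equiv.Perm.coe_pow, Equiv.Perm.coe_pow]
  exact (Function.iterate_mod_minimalPeriod_eq (f := ⇑π) (x := y) (n := a)).symm

lemma pt_inj (π : Equiv.Perm X) (y : X) : Function.Injective (pt π y) := by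
  intro i j h
  have hi := ZMod.val_lt i
  have hj := ZMod.val_lt j
  have h' : (⇑π)^[i.val] y = (⇑π)^[j.val] y := by
    unfold pt at h
    rwa [Equiv.Perm.coe_pow, Equiv.Perm.coe_pow] at h
  have := Function.iterate_injOn_Iio_minimalPeriod (f := ⇑π) (x := y)
    (Set.mem_Iio.2 hi) (Set.mem_Iio.2 hj) h'
  exact ZMod.val_injective _ this

lemma pow_pt (π : Equiv.Perm X) (y : X) (a : ℕ) (i : ZMod (per π y)) :
    (π ^ a) (pt π y i) = pt π y (i + a) := by
  unfold pt
  rw [← Equiv.Perm.mul_apply, ← pow_add, pow_cast]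
  congr 1
  push_cast
  rw [ZMod.natCast_rightInverse i]
  ring

lemma orb_eq_range (π : Equiv.Perm X) (y : X) : Orb π y = Set.range (pt π y) := by
  ext x
  constructor
  · rintro ⟨i, rfl⟩; exact ⟨↑i, (pow_cast π y i).symm⟩
  · rintro ⟨i, rfl⟩; exact ⟨i.val, rfl⟩

lemma ncard_orb (π : Equiv.Perm X) (y : X) : (Orb π y).ncard = per π y := by
  rw [orb_eq_range, ← Set.image_univ, Set.ncard_image_of_injective _ (pt_inj π y),
    Set.ncard_univ, Nat.card_zmod]

/-! ### Orbits of `π²` on `X × X` -/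

lemma sigma2_pow (π : Equiv.Perm X) (t : ℕ) (p : X × X) :
    ((Equiv.prodCongr (π^2) (π^2)) ^ t) p = ((π ^ (2*t)) p.1, (π ^ (2*t)) p.2) := by
  induction t generalizing p with
  | zero => simp
  | succ t ih =>
    rw [pow_succ, Equiv.Perm.mul_apply]
    show ((Equiv.prodCongr (π^2) (π^2)) ^ t) ((π^2) p.1, (π^2) p.2) = _
    rw [ih]
    simp only
    rw [← Equiv.Perm.mul_apply, ← Equiv.Perm.mul_apply, ← pow_add]
    have : 2 * t + 2 = 2 * (t + 1) := by ring
    rw [this]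

lemma orb2 (π : Equiv.Perm X) (y : X) (a b : ZMod (per π y)) :
    Orb (Equiv.prodCongr (π^2) (π^2)) (pt π y a, pt π y b) =
      Set.range (fun s : ZMod (per π y) => (pt π y (a + 2*s), pt π y (b + 2*s))) := by
  ext p
  constructor
  · rintro ⟨t, rfl⟩
    refine ⟨↑t, ?_⟩
    rw [sigma2_pow]
    simp only
    rw [pow_pt, pow_pt]
    have hc : ((2 * t : ℕ) : ZMod (per π y)) = 2 * (↑t : ZMod (per π y)) := by push_cast; ring
    rw [hc]
  · rintro ⟨s, rfl⟩
    refine ⟨s.val, ?_⟩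
    rw [sigma2_pow]
    simp only
    rw [pow_pt, pow_pt]
    have hc : ((2 * s.val : ℕ) : ZMod (per π y)) = 2 * s := by
      push_cast
      rw [ZMod.natCast_rightInverse s]
    rw [hc]

lemma orb2_eq_iff (π : Equiv.Perm X) (y : X) (a b c d : ZMod (per π y)) :
    Orb (Equiv.prodCongr (π^2) (π^2)) (pt π y c, pt π y d) =
      Orb (Equiv.prodCongr (π^2) (π^2)) (pt π y a, pt π y b) ↔
      ∃ s : ZMod (per π y), c = a + 2*s ∧ d = b + 2*s := by
  rw [orb_eq_iff, orb2]
  constructor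
  · rintro ⟨s, hs⟩
    simp only [Prod.mk.injEq] at hs
    exact ⟨s, (pt_inj π y hs.1).symm, (pt_inj π y hs.2).symm⟩
  · rintro ⟨s, rfl, rfl⟩
    exact ⟨s, rfl⟩

omit [Fintype X] in
lemma comm_apply (π : Equiv.Perm X) (k : ℕ) (x : X) : π ((π ^ k) x) = (π ^ k) (π x) := by
  rw [← Equiv.Perm.mul_apply, ← Equiv.Perm.mul_apply, ← pow_succ', ← pow_succ]

lemma twist_orb (π : Equiv.Perm X) (u v : X) :
    twistPi π (Orb (Equiv.prodCongr (π^2) (π^2)) (u, v)) =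
      Orb (Equiv.prodCongr (π^2) (π^2)) (π v, π u) := by
  have key : ∀ t : ℕ, (fun p : X × X => (π p.2, π p.1))
      (((Equiv.prodCongr (π^2) (π^2)) ^ t) (u, v)) =
      ((Equiv.prodCongr (π^2) (π^2)) ^ t) (π v, π u) := by
    intro t
    rw [sigma2_pow, sigma2_pow]
    simp only
    rw [comm_apply, comm_apply]
  ext p
  constructor
  · rintro ⟨q, ⟨t, rfl⟩, rfl⟩
    exact ⟨t, (key t).symm⟩
  · rintro ⟨t, rfl⟩
    exact ⟨((Equiv.prodCongr (π^2) (π^2)) ^ t) (u, v), ⟨t, rfl⟩, key t⟩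

/-! ### Singularity analysis -/

lemma orb2_subset (π : Equiv.Perm X) (y : X) (a b : ZMod (per π y)) :
    Orb (Equiv.prodCongr (π^2) (π^2)) (pt π y a, pt π y b) ⊆ (Orb π y) ×ˢ (Orb π y) := by
  rw [orb2, orb_eq_range]
  rintro p ⟨s, rfl⟩
  exact ⟨⟨_, rfl⟩, ⟨_, rfl⟩⟩

lemma pt_succ (π : Equiv.Perm X) (y : X) (i : ZMod (per π y)) :
    π (pt π y i) = pt π y (i + 1) := by
  have h := pow_pt π y 1 i
  rw [pow_one, Nat.cast_one] at h
  exact h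

lemma singular_iff (π : Equiv.Perm X) (y : X) (a b : ZMod (per π y)) :
    twistPi π (Orb (Equiv.prodCongr (π^2) (π^2)) (pt π y a, pt π y b)) =
      Orb (Equiv.prodCongr (π^2) (π^2)) (pt π y a, pt π y b) ↔
      ∃ s : ZMod (per π y), b + 1 = a + 2*s ∧ a + 1 = b + 2*s := by
  rw [twist_orb, pt_succ, pt_succ, orb2_eq_iff]

lemma decomp (π : Equiv.Perm X) (y : X) {Γ : Set (X × X)}
    (hΓ : IsCycleOf (Equiv.prodCongr (π^2) (π^2)) Γ)
    (hsub : Γ ⊆ (Orb π y) ×ˢ (Orb π y)) :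
    ∃ a b : ZMod (per π y), Γ = Orb (Equiv.prodCongr (π^2) (π^2)) (pt π y a, pt π y b) := by
  obtain ⟨z, rfl⟩ := hΓ
  have hz : z ∈ Orb (Equiv.prodCongr (π^2) (π^2)) z := mem_orb_self _ _
  have hz2 := hsub hz
  rw [Set.mem_prod, orb_eq_range] at hz2
  obtain ⟨⟨a, ha⟩, ⟨b, hb⟩⟩ := hz2
  refine ⟨a, b, ?_⟩
  have : z = (pt π y a, pt π y b) := by
    rw [ha, hb]
  rw [← this]
  rfl

lemma singular_odd_eq {n : ℕ} (hodd : Odd n) {a b : ZMod n}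
    (h : ∃ s : ZMod n, b + 1 = a + 2*s ∧ a + 1 = b + 2*s) : b = a := by
  obtain ⟨s, h1, h2⟩ := h
  have h3 : 2*b = 2*a := by linear_combination h1 - h2
  exact odd_two_mul_cancel hodd h3

lemma even_sing_sol {n : ℕ} [NeZero n] (hd : (2:ℕ) ∣ n) {a b : ZMod n}
    (h : ∃ s : ZMod n, b + 1 = a + 2*s ∧ a + 1 = b + 2*s) :
    b = a + ↑(n/2) ∧ Odd (n/2) := by
  obtain ⟨s, h1, h2⟩ := h
  have h3 : 2*(b - a) = 0 := by linear_combination h1 - h2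
  have h4 := even_two_mul_eq_zero hd h3
  have h5 : (∃ t : ZMod n, 2*t = b - a + 1) := ⟨s, by linear_combination -h1⟩
  rw [even_exists_two_mul_iff hd, map_add, map_one] at h5
  rcases h4 with h4 | h4
  · exfalso
    rw [h4, map_zero, zero_add] at h5
    exact one_ne_zero h5
  · refine ⟨by linear_combination h4, ?_⟩
    rw [h4, map_natCast] at h5
    have h6 : ((n/2 : ℕ) : ZMod 2) = 1 := by
      have hx : ∀ x : ZMod 2, x + 1 = 0 → x = 1 := by decide
      exact hx _ h5
    rcases Nat.even_or_odd (n/2) with he | ho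
    · exfalso
      have : ((n/2 : ℕ) : ZMod 2) = 0 := by
        rw [ZMod.natCast_eq_zero_iff]
        exact he.two_dvd
      rw [this] at h6
      exact absurd h6 (by decide)
    · exact ho

lemma even_sing_sol' {n : ℕ} [NeZero n] (hd : (2:ℕ) ∣ n) (hm : Odd (n/2))
    (hn2 : 2*((n/2 : ℕ) : ZMod n) = 0) (a : ZMod n) :
    ∃ s : ZMod n, (a + ↑(n/2)) + 1 = a + 2*s ∧ a + 1 = (a + ↑(n/2)) + 2*s := by
  have hex : ∃ s : ZMod n, 2*s = (↑(n/2) : ZMod n) + 1 := by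
    rw [even_exists_two_mul_iff hd, map_add, map_one, map_natCast]
    obtain ⟨k, hk⟩ := hm
    rw [hk]
    push_cast
    have h2 : (2 : ZMod 2) = 0 := rfl
    linear_combination ((k : ZMod 2) + 1) * h2
  obtain ⟨s, hs⟩ := hex
  exact ⟨s, by linear_combination -hs, by linear_combination -hn2 - hs⟩

lemma even_no_one {n : ℕ} [NeZero n] (hd : (2:ℕ) ∣ n) :
    ¬ ∃ s : ZMod n, (1 : ZMod n) = 0 + 2*s := by
  rintro ⟨s, hs⟩
  have : ∃ t : ZMod n, 2*t = 1 := ⟨s, by linear_combination -hs⟩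
  rw [even_exists_two_mul_iff hd, map_one] at this
  exact one_ne_zero this

lemma even_orbrep {n : ℕ} [NeZero n] (hd : (2:ℕ) ∣ n) (a : ZMod n) :
    (∃ s : ZMod n, (0:ZMod n) = a + 2*s) ∨ (∃ s : ZMod n, (1:ZMod n) = a + 2*s) := by
  have hx : ∀ x : ZMod 2, -x = 0 ∨ 1 - x = 0 := by decide
  rcases hx ((ZMod.castHom hd (ZMod 2)) a) with h | h
  · left
    have : ∃ s : ZMod n, 2*s = -a := by
      rw [even_exists_two_mul_iff hd, map_neg]
      exact h
    obtain ⟨s, hs⟩ := this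
    exact ⟨s, by linear_combination -hs⟩
  · right
    have : ∃ s : ZMod n, 2*s = 1 - a := by
      rw [even_exists_two_mul_iff hd, map_sub, map_one]
      exact h
    obtain ⟨s, hs⟩ := this
    exact ⟨s, by linear_combination -hs⟩

end S12

/-- Counting the singular orbits (`Γπτ = Γ`) of `π²` acting coordinatewise on
`X × X`: each odd cycle of `π` contributes one singular orbit, lying in the
diagonal; each cycle of length `≡ 2 (mod 4)` contributes two, both off the
diagonal; cycles of length `≡ 0 (mod 4)` contribute none; and every singular
orbit lies in `C ×ˢ C` for some cycle `C` of `π`. -/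
theorem stmt12 {X : Type*} [Fintype X] (π : Equiv.Perm X) :
    (∀ C : Set X, IsCycleOf π C →
      (Odd C.ncard →
        {Γ : Set (X × X) | IsCycleOf (Equiv.prodCongr (π ^ 2) (π ^ 2)) Γ ∧
          Γ ⊆ C ×ˢ C ∧ twistPi π Γ = Γ}.ncard = 1 ∧
        ∀ Γ : Set (X × X), IsCycleOf (Equiv.prodCongr (π ^ 2) (π ^ 2)) Γ →
          Γ ⊆ C ×ˢ C → twistPi π Γ = Γ → Γ ⊆ {p : X × X | p.1 = p.2}) ∧
      (C.ncard % 4 = 2 →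
        {Γ : Set (X × X) | IsCycleOf (Equiv.prodCongr (π ^ 2) (π ^ 2)) Γ ∧
          Γ ⊆ C ×ˢ C ∧ twistPi π Γ = Γ}.ncard = 2 ∧
        ∀ Γ : Set (X × X), IsCycleOf (Equiv.prodCongr (π ^ 2) (π ^ 2)) Γ →
          Γ ⊆ C ×ˢ C → twistPi π Γ = Γ → Γ ∩ {p : X × X | p.1 = p.2} = ∅) ∧
      (C.ncard % 4 = 0 →
        {Γ : Set (X × X) | IsCycleOf (Equiv.prodCongr (π ^ 2) (π ^ 2)) Γ ∧
          Γ ⊆ C ×ˢ C ∧ twistPi π Γ = Γ}.ncard = 0)) ∧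
    (∀ Γ : Set (X × X), IsCycleOf (Equiv.prodCongr (π ^ 2) (π ^ 2)) Γ →
      twistPi π Γ = Γ → ∃ C : Set X, IsCycleOf π C ∧ Γ ⊆ C ×ˢ C) := by
  constructor
  · intro C hC
    obtain ⟨y, rfl⟩ := hC
    rw [show {x | ∃ i : ℕ, (π ^ i) y = x} = S12.Orb π y from rfl]
    refine ⟨?_, ?_, ?_⟩
    · -- odd case
      intro hodd
      rw [S12.ncard_orb] at hodd
      have hset : {Γ : Set (X × X) | IsCycleOf (Equiv.prodCongr (π ^ 2) (π ^ 2)) Γ ∧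
          Γ ⊆ S12.Orb π y ×ˢ S12.Orb π y ∧ twistPi π Γ = Γ} =
          {S12.Orb (Equiv.prodCongr (π ^ 2) (π ^ 2)) (S12.pt π y 0, S12.pt π y 0)} := by
        ext Γ
        simp only [Set.mem_setOf_eq, Set.mem_singleton_iff]
        constructor
        · rintro ⟨hΓ, hsub, hsing⟩
          obtain ⟨a, b, rfl⟩ := S12.decomp π y hΓ hsub
          rw [S12.singular_iff] at hsing
          have hba := S12.singular_odd_eq hodd hsing
          subst hba
          rw [S12.orb2_eq_iff]
          obtain ⟨s, hs⟩ := S12.odd_exists_half hodd b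
          exact ⟨s, by linear_combination -hs, by linear_combination -hs⟩
        · rintro rfl
          refine ⟨S12.isCycleOf_orb _ _, S12.orb2_subset π y 0 0, ?_⟩
          rw [S12.singular_iff]
          obtain ⟨s, hs⟩ := S12.odd_exists_half hodd 1
          exact ⟨s, by linear_combination -hs, by linear_combination -hs⟩
      constructor
      · rw [hset, Set.ncard_singleton]
      · intro Γ hΓ hsub hsing
        obtain ⟨a, b, rfl⟩ := S12.decomp π y hΓ hsub
        rw [S12.singular_iff] at hsing
        have hba := S12.singular_odd_eq hodd hsing
        subst hba
        rw [S12.orb2]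
        rintro p ⟨s, rfl⟩
        rfl
    · -- n ≡ 2 (mod 4) case
      intro h2
      rw [S12.ncard_orb] at h2
      have hd : (2:ℕ) ∣ S12.per π y := by omega
      have hm_odd : Odd (S12.per π y / 2) := by rw [Nat.odd_iff]; omega
      have hn2 : 2 * ((S12.per π y / 2 : ℕ) : ZMod (S12.per π y)) = 0 := by
        have h' : 2 * (S12.per π y / 2) = S12.per π y := by omega
        calc 2 * ((S12.per π y / 2 : ℕ) : ZMod (S12.per π y))
            = ((2 * (S12.per π y / 2) : ℕ) : ZMod (S12.per π y)) := by push_cast; ring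
          _ = ((S12.per π y : ℕ) : ZMod (S12.per π y)) := by rw [h']
          _ = 0 := ZMod.natCast_self _
      have hm0 : ((S12.per π y / 2 : ℕ) : ZMod (S12.per π y)) ≠ 0 := by
        rw [Ne, ZMod.natCast_eq_zero_iff]
        intro hdd
        have := Nat.le_of_dvd (by omega) hdd
        omega
      have hset : {Γ : Set (X × X) | IsCycleOf (Equiv.prodCongr (π ^ 2) (π ^ 2)) Γ ∧
          Γ ⊆ S12.Orb π y ×ˢ S12.Orb π y ∧ twistPi π Γ = Γ} =
          {S12.Orb (Equiv.prodCongr (π ^ 2) (π ^ 2))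
              (S12.pt π y 0, S12.pt π y ↑(S12.per π y / 2)),
            S12.Orb (Equiv.prodCongr (π ^ 2) (π ^ 2))
              (S12.pt π y 1, S12.pt π y (1 + ↑(S12.per π y / 2)))} := by
        ext Γ
        simp only [Set.mem_setOf_eq, Set.mem_insert_iff, Set.mem_singleton_iff]
        constructor
        · rintro ⟨hΓ, hsub, hsing⟩
          obtain ⟨a, b, rfl⟩ := S12.decomp π y hΓ hsub
          rw [S12.singular_iff] at hsing
          obtain ⟨hb, -⟩ := S12.even_sing_sol hd hsing
          subst hb
          rcases S12.even_orbrep hd a with ⟨s, hs⟩ | ⟨s, hs⟩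
          · left
            rw [S12.orb2_eq_iff]
            exact ⟨-s, by linear_combination -hs, by linear_combination -hs⟩
          · right
            rw [S12.orb2_eq_iff]
            exact ⟨-s, by linear_combination -hs, by linear_combination -hs⟩
        · intro h
          rcases h with rfl | rfl
          · refine ⟨S12.isCycleOf_orb _ _, S12.orb2_subset π y _ _, ?_⟩
            rw [S12.singular_iff]
            obtain ⟨s, hs1, hs2⟩ := S12.even_sing_sol' hd hm_odd hn2 0
            exact ⟨s, by linear_combination hs1, by linear_combination hs2⟩
          · refine ⟨S12.isCycleOf_orb _ _, S12.orb2_subset π y _ _, ?_⟩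
            rw [S12.singular_iff]
            obtain ⟨s, hs1, hs2⟩ := S12.even_sing_sol' hd hm_odd hn2 1
            exact ⟨s, by linear_combination hs1, by linear_combination hs2⟩
      have hne : S12.Orb (Equiv.prodCongr (π ^ 2) (π ^ 2))
            (S12.pt π y 0, S12.pt π y ↑(S12.per π y / 2)) ≠
          S12.Orb (Equiv.prodCongr (π ^ 2) (π ^ 2))
            (S12.pt π y 1, S12.pt π y (1 + ↑(S12.per π y / 2))) := by
        intro heq
        rw [S12.orb2_eq_iff] at heq
        obtain ⟨s, hs1, -⟩ := heq
        exact S12.even_no_one hd ⟨-s, by linear_combination -hs1⟩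
      constructor
      · rw [hset]
        exact Set.ncard_pair hne
      · intro Γ hΓ hsub hsing
        obtain ⟨a, b, rfl⟩ := S12.decomp π y hΓ hsub
        rw [S12.singular_iff] at hsing
        obtain ⟨hb, -⟩ := S12.even_sing_sol hd hsing
        subst hb
        rw [S12.orb2]
        rw [Set.eq_empty_iff_forall_notMem]
        rintro p ⟨⟨s, rfl⟩, hdiag⟩
        have hpt : S12.pt π y (a + 2*s) = S12.pt π y (a + ↑(S12.per π y / 2) + 2*s) := hdiag
        have := S12.pt_inj π y hpt
        exact hm0 (by linear_combination -this)
    · -- n ≡ 0 (mod 4) case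
      intro h0
      rw [S12.ncard_orb] at h0
      have hd : (2:ℕ) ∣ S12.per π y := by omega
      have hset : {Γ : Set (X × X) | IsCycleOf (Equiv.prodCongr (π ^ 2) (π ^ 2)) Γ ∧
          Γ ⊆ S12.Orb π y ×ˢ S12.Orb π y ∧ twistPi π Γ = Γ} = ∅ := by
        rw [Set.eq_empty_iff_forall_notMem]
        rintro Γ ⟨hΓ, hsub, hsing⟩
        obtain ⟨a, b, rfl⟩ := S12.decomp π y hΓ hsub
        rw [S12.singular_iff] at hsing
        obtain ⟨-, hodd⟩ := S12.even_sing_sol hd hsing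
        rw [Nat.odd_iff] at hodd
        omega
      rw [hset]
      exact Set.ncard_empty _
  · -- every singular orbit lies in C ×ˢ C
    intro Γ hΓ hsing
    obtain ⟨z, rfl⟩ := hΓ
    rw [show {x | ∃ i : ℕ, ((Equiv.prodCongr (π ^ 2) (π ^ 2)) ^ i) z = x} =
      S12.Orb (Equiv.prodCongr (π ^ 2) (π ^ 2)) z from rfl] at hsing ⊢
    have hsing' : S12.Orb (Equiv.prodCongr (π ^ 2) (π ^ 2)) (π z.2, π z.1) =
        S12.Orb (Equiv.prodCongr (π ^ 2) (π ^ 2)) z :=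
      (S12.twist_orb π z.1 z.2).symm.trans hsing
    rw [S12.orb_eq_iff] at hsing'
    obtain ⟨t, ht⟩ := hsing'
    rw [S12.sigma2_pow] at ht
    rw [Prod.ext_iff] at ht
    have h1 : (π ^ (2*t)) z.1 = π z.2 := ht.1
    have hN : 1 ≤ orderOf π := orderOf_pos π
    have h2 : z.2 = (π ^ (orderOf π - 1 + 2*t)) z.1 := by
      have hNz : (π ^ orderOf π) z.2 = z.2 := by
        rw [pow_orderOf_eq_one]; rfl
      calc z.2 = (π ^ orderOf π) z.2 := hNz.symm
        _ = (π ^ (orderOf π - 1)) (π z.2) := by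
            rw [← Equiv.Perm.mul_apply, ← pow_succ]
            have : orderOf π - 1 + 1 = orderOf π := by omega
            rw [this]
        _ = (π ^ (orderOf π - 1)) ((π ^ (2*t)) z.1) := by rw [h1]
        _ = (π ^ (orderOf π - 1 + 2*t)) z.1 := by
            rw [← Equiv.Perm.mul_apply, ← pow_add]
    refine ⟨S12.Orb π z.1, ⟨z.1, rfl⟩, ?_⟩
    rintro p ⟨s, rfl⟩
    rw [S12.sigma2_pow]
    refine ⟨⟨2*s, rfl⟩, ?_⟩
    show (π ^ (2*s)) z.2 ∈ S12.Orb π z.1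
    rw [h2, ← Equiv.Perm.mul_apply, ← pow_add]
    exact ⟨2*s + (orderOf π - 1 + 2*t), rfl⟩
end

section
/- For integers p, q ≥ 0, let a_{p,q} be the number of partitions of Y ∪ Y′ into 2q blocks, where Y, Y′ are disjoint p-element sets with a fixed bijection y ↦ y′, such that the partition is invariant under the bijection-induced duality and no block contains both y and y′ for any y. Then a_{p,q} = 2^{p−q} · S(p,q), where S is the Stirling number of the second kind. -/
/-!
Remove the last element `y` of `Y` together with `y'` from a partition `P` counted by `a`. If
`{y}` is a block of `P`, so is its dual `{y'}`, and what remains is a partition of the same kind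
with two blocks fewer. Otherwise `y` lies in a block `C ∪ {y}` and `y'` in its dual `C' ∪ {y'}`;
what remains has the same `2q` blocks, and `P` is recovered from it and the choice of `C`. Hence
`a (p + 1) (q + 1) = a p q + 2 (q + 1) a p (q + 1)`, which `2 ^ (p - q) S(p, q)` also satisfies
because `S(p + 1, q + 1) = S(p, q) + (q + 1) S(p, q + 1)`.
-/

open Finset

theorem stirling_eq_stirlingSecond_s13 : ∀ n k : ℕ, stirling n k = Nat.stirlingSecond n k
  | 0, 0 | 0, _ + 1 | _ + 1, 0 => rfl
  | n + 1, k + 1 => by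
    rw [stirling, Nat.stirlingSecond_succ_succ, stirling_eq_stirlingSecond_s13 n k,
      stirling_eq_stirlingSecond_s13 n (k + 1), add_comm]

namespace SelfDualPartition

variable {α : Type*}

/-- `α × Bool` models `Y ∪ Y'`, with `(y, true)` for `y` and `(y, false)` for `y'`. -/
def dual (z : α × Bool) : α × Bool := (z.1, !z.2)

@[simp]
lemma dual_dual (z : α × Bool) : dual (dual z) = z := by simp [dual]

variable [DecidableEq α]

lemma mem_image_dual {B : Finset (α × Bool)} {z : α × Bool} :
    z ∈ B.image dual ↔ dual z ∈ B :=
  ⟨fun h ↦ by obtain ⟨w, hw, rfl⟩ := mem_image.1 h; simpa,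
    fun h ↦ mem_image.2 ⟨_, h, dual_dual z⟩⟩

@[simp]
lemma image_dual_image_dual (B : Finset (α × Bool)) : (B.image dual).image dual = B := by
  ext z; simp only [mem_image_dual, dual_dual]

lemma image_dual_eq_iff {B C : Finset (α × Bool)} : B.image dual = C ↔ B = C.image dual :=
  ⟨fun h ↦ by rw [← h, image_dual_image_dual], fun h ↦ by rw [h, image_dual_image_dual]⟩

end SelfDualPartition

open SelfDualPartition

structure IsSelfDualPartition {α : Type*} [DecidableEq α] (P : Finset (Finset (α × Bool))) :
    Prop where
  nonempty : ∀ B ∈ P, B.Nonempty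
  disjoint : ∀ A ∈ P, ∀ B ∈ P, A ≠ B → Disjoint A B
  cover : ∀ z, ∃ B ∈ P, z ∈ B
  image_dual_mem : ∀ B ∈ P, B.image dual ∈ P
  orthogonal : ∀ B ∈ P, ∀ y, ¬((y, true) ∈ B ∧ (y, false) ∈ B)

namespace IsSelfDualPartition

variable {α : Type*} [DecidableEq α] {P : Finset (Finset (α × Bool))} {A B : Finset (α × Bool)}

lemma eq_of_mem_of_mem (hP : IsSelfDualPartition P) (hA : A ∈ P) (hB : B ∈ P) {z : α × Bool}
    (hzA : z ∈ A) (hzB : z ∈ B) : A = B :=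
  by_contra fun hne ↦ disjoint_left.1 (hP.disjoint A hA B hB hne) hzA hzB

lemma empty_notMem (hP : IsSelfDualPartition P) : ∅ ∉ P :=
  fun h ↦ not_nonempty_empty (hP.nonempty ∅ h)

lemma image_dual_ne (hP : IsSelfDualPartition P) (hB : B ∈ P) : B.image dual ≠ B := by
  intro h
  obtain ⟨⟨y, b⟩, hz⟩ := hP.nonempty B hB
  have hdz : (y, !b) ∈ B := h ▸ mem_image_dual.2 (by simpa [dual])
  cases b
  exacts [hP.orthogonal B hB y ⟨hdz, hz⟩, hP.orthogonal B hB y ⟨hz, hdz⟩]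

lemma eq_empty [IsEmpty α] (hP : IsSelfDualPartition P) : P = ∅ :=
  eq_empty_of_forall_notMem fun B hB ↦ by
    obtain ⟨⟨a, _⟩, -⟩ := hP.nonempty B hB
    exact isEmptyElim a

end IsSelfDualPartition

namespace SelfDualPartition

variable {p : ℕ}

def lift : Fin p × Bool ↪ Fin (p + 1) × Bool :=
  Fin.castSuccEmb.prodMap (Function.Embedding.refl Bool)

def lastPoint (b : Bool) : Fin (p + 1) × Bool := (Fin.last p, b)

lemma lift_apply (z : Fin p × Bool) : lift z = (z.1.castSucc, z.2) := rfl

lemma mk_castSucc (y : Fin p) (b : Bool) :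
    ((y.castSucc, b) : Fin (p + 1) × Bool) = lift (y, b) :=
  rfl

lemma mk_last (b : Bool) : ((Fin.last p, b) : Fin (p + 1) × Bool) = lastPoint b := rfl

@[simp]
lemma lift_ne_lastPoint (z : Fin p × Bool) (b : Bool) : lift z ≠ lastPoint b := by
  simp [lift_apply, lastPoint, (Fin.castSucc_lt_last z.1).ne]

@[simp]
lemma lastPoint_ne_lift (z : Fin p × Bool) (b : Bool) : lastPoint b ≠ lift z :=
  (lift_ne_lastPoint z b).symm

@[simp]
lemma lastPoint_inj {b b' : Bool} : lastPoint (p := p) b = lastPoint b' ↔ b = b' := by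
  simp [lastPoint]

@[simp]
lemma dual_lift (z : Fin p × Bool) : dual (lift z) = lift (dual z) := rfl

@[simp]
lemma dual_lastPoint (b : Bool) : dual (lastPoint (p := p) b) = lastPoint !b := rfl

@[elab_as_elim]
lemma point_induction {motive : Fin (p + 1) × Bool → Prop} (lift : ∀ z, motive (lift z))
    (last : ∀ b, motive (lastPoint b)) (w : Fin (p + 1) × Bool) : motive w := by
  obtain ⟨y, b⟩ := w
  induction y using Fin.lastCases with
  | last => exact last b
  | cast y => exact lift (y, b)

def up (B : Finset (Fin p × Bool)) : Finset (Fin (p + 1) × Bool) := B.map lift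

noncomputable def down (B : Finset (Fin (p + 1) × Bool)) : Finset (Fin p × Bool) :=
  B.preimage lift lift.injective.injOn

@[simp]
lemma lift_mem_up {B : Finset (Fin p × Bool)} {z : Fin p × Bool} : lift z ∈ up B ↔ z ∈ B :=
  mem_map' lift

@[simp]
lemma lastPoint_notMem_up {B : Finset (Fin p × Bool)} {b : Bool} : lastPoint b ∉ up B := by
  simp [up, mem_map]

@[simp]
lemma mem_down {B : Finset (Fin (p + 1) × Bool)} {z : Fin p × Bool} :
    z ∈ down B ↔ lift z ∈ B :=
  mem_preimage

@[simp]
lemma down_up (B : Finset (Fin p × Bool)) : down (up B) = B := preimage_map lift B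

lemma up_injective : Function.Injective (up (p := p)) := map_injective lift

lemma up_down {B : Finset (Fin (p + 1) × Bool)} (h : ∀ b, lastPoint b ∉ B) :
    up (down B) = B := by
  ext w
  induction w using point_induction with
  | lift z => simp
  | last b => simp [h]

lemma up_ne_singleton_lastPoint (B : Finset (Fin p × Bool)) (b : Bool) :
    up B ≠ {lastPoint b} :=
  fun h ↦ lastPoint_notMem_up (h ▸ mem_singleton_self _)

@[simp]
lemma down_singleton_lastPoint (b : Bool) : down {lastPoint (p := p) b} = ∅ := by
  ext z; simp

lemma image_dual_up (B : Finset (Fin p × Bool)) : (up B).image dual = up (B.image dual) := by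
  ext w
  induction w using point_induction with
  | lift z => rw [mem_image_dual, dual_lift, lift_mem_up, lift_mem_up, mem_image_dual]
  | last b => simp only [lastPoint_notMem_up, mem_image_dual, dual_lastPoint]

lemma image_dual_down (B : Finset (Fin (p + 1) × Bool)) :
    (down B).image dual = down (B.image dual) := by
  ext z; rw [mem_image_dual, mem_down, mem_down, mem_image_dual, dual_lift]

/-- The blocks `{lastPoint b}` restrict to `∅`, which is not a block. -/
noncomputable def eraseLast (P : Finset (Finset (Fin (p + 1) × Bool))) :
    Finset (Finset (Fin p × Bool)) :=
  (P.image down).erase ∅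

def addLastSingletons (Q : Finset (Finset (Fin p × Bool))) :
    Finset (Finset (Fin (p + 1) × Bool)) :=
  insert {lastPoint true} (insert {lastPoint false} (Q.image up))

/-- `B` with `lastPoint true` added if `B = C` and `lastPoint false` added if `B` is dual to `C`. -/
def extendBlock (C B : Finset (Fin p × Bool)) : Finset (Fin (p + 1) × Bool) :=
  up B ∪ (univ.filter fun b ↦ B = cond b C (C.image dual)).image lastPoint

@[simp]
lemma mem_eraseLast {P : Finset (Finset (Fin (p + 1) × Bool))} {C : Finset (Fin p × Bool)} :
    C ∈ eraseLast P ↔ C ≠ ∅ ∧ ∃ B ∈ P, down B = C := by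
  simp [eraseLast]

lemma mem_addLastSingletons {Q : Finset (Finset (Fin p × Bool))}
    {B : Finset (Fin (p + 1) × Bool)} :
    B ∈ addLastSingletons Q ↔ (∃ b, {lastPoint b} = B) ∨ ∃ B' ∈ Q, up B' = B := by
  simp only [addLastSingletons, mem_insert, mem_image, Bool.exists_bool, eq_comm (b := B)]
  tauto

@[simp]
lemma lift_mem_extendBlock {C B : Finset (Fin p × Bool)} {z : Fin p × Bool} :
    lift z ∈ extendBlock C B ↔ z ∈ B := by
  simp [extendBlock]

@[simp]
lemma lastPoint_mem_extendBlock {C B : Finset (Fin p × Bool)} {b : Bool} :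
    lastPoint b ∈ extendBlock C B ↔ B = cond b C (C.image dual) := by
  simp [extendBlock]

@[simp]
lemma down_extendBlock (C B : Finset (Fin p × Bool)) : down (extendBlock C B) = B := by
  ext z; simp

lemma extendBlock_injective (C : Finset (Fin p × Bool)) : Function.Injective (extendBlock C) :=
  Function.LeftInverse.injective (g := down) (down_extendBlock C)

lemma image_dual_extendBlock (C B : Finset (Fin p × Bool)) :
    (extendBlock C B).image dual = extendBlock C (B.image dual) := by
  ext w
  induction w using point_induction with
  | lift z =>
    rw [mem_image_dual, dual_lift, lift_mem_extendBlock, lift_mem_extendBlock, mem_image_dual]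
  | last b =>
    rw [mem_image_dual, dual_lastPoint, lastPoint_mem_extendBlock, lastPoint_mem_extendBlock]
    cases b <;> simp only [Bool.not_false, Bool.not_true, cond_true, cond_false,
      image_dual_eq_iff, image_dual_image_dual]

variable {P : Finset (Finset (Fin (p + 1) × Bool))} {Q : Finset (Finset (Fin p × Bool))}

lemma isSelfDualPartition_eraseLast (hP : IsSelfDualPartition P) :
    IsSelfDualPartition (eraseLast P) where
  nonempty B hB := nonempty_iff_ne_empty.2 (ne_of_mem_erase hB)
  disjoint A hA B hB hAB := by
    obtain ⟨A', hA', rfl⟩ := mem_image.1 (mem_of_mem_erase hA)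
    obtain ⟨B', hB', rfl⟩ := mem_image.1 (mem_of_mem_erase hB)
    exact disjoint_preimage (hP.disjoint A' hA' B' hB' (ne_of_apply_ne _ hAB))
  cover z := by
    obtain ⟨B, hB, hz⟩ := hP.cover (lift z)
    exact ⟨down B, mem_eraseLast.2 ⟨ne_empty_of_mem (mem_down.2 hz), B, hB, rfl⟩, mem_down.2 hz⟩
  image_dual_mem B hB := by
    obtain ⟨B', hB', rfl⟩ := mem_image.1 (mem_of_mem_erase hB)
    have hne := (nonempty_iff_ne_empty.2 (ne_of_mem_erase hB)).image dual
    rw [image_dual_down] at hne ⊢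
    exact mem_erase.2 ⟨hne.ne_empty, mem_image_of_mem _ (hP.image_dual_mem B' hB')⟩
  orthogonal B hB y := by
    obtain ⟨B', hB', rfl⟩ := mem_image.1 (mem_of_mem_erase hB)
    simpa only [mem_down, ← mk_castSucc] using hP.orthogonal B' hB' y.castSucc

lemma isSelfDualPartition_addLastSingletons (hQ : IsSelfDualPartition Q) :
    IsSelfDualPartition (addLastSingletons Q) where
  nonempty B hB := by
    obtain ⟨b, rfl⟩ | ⟨B', hB', rfl⟩ := mem_addLastSingletons.1 hB
    exacts [singleton_nonempty _, map_nonempty.2 (hQ.nonempty B' hB')]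
  disjoint A hA B hB hAB := by
    obtain ⟨a, rfl⟩ | ⟨A', hA', rfl⟩ := mem_addLastSingletons.1 hA <;>
      obtain ⟨b, rfl⟩ | ⟨B', hB', rfl⟩ := mem_addLastSingletons.1 hB
    · simpa [eq_comm] using hAB
    · simp
    · simp
    · exact (disjoint_map lift).2 (hQ.disjoint A' hA' B' hB' (ne_of_apply_ne _ hAB))
  cover w := by
    induction w using point_induction with
    | lift z =>
      obtain ⟨B, hB, hz⟩ := hQ.cover z
      exact ⟨up B, mem_addLastSingletons.2 (.inr ⟨B, hB, rfl⟩), lift_mem_up.2 hz⟩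
    | last b =>
      exact ⟨{lastPoint b}, mem_addLastSingletons.2 (.inl ⟨b, rfl⟩), mem_singleton_self _⟩
  image_dual_mem B hB := by
    obtain ⟨b, rfl⟩ | ⟨B', hB', rfl⟩ := mem_addLastSingletons.1 hB
    · rw [image_singleton, dual_lastPoint]
      exact mem_addLastSingletons.2 (.inl ⟨!b, rfl⟩)
    · rw [image_dual_up]
      exact mem_addLastSingletons.2 (.inr ⟨_, hQ.image_dual_mem B' hB', rfl⟩)
  orthogonal B hB y := by
    obtain ⟨b, rfl⟩ | ⟨B', hB', rfl⟩ := mem_addLastSingletons.1 hB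
    · simp only [mem_singleton, lastPoint, Prod.mk.injEq]
      rintro ⟨⟨-, rfl⟩, -, ⟨⟩⟩
    induction y using Fin.lastCases with
    | last => simp [mk_last]
    | cast y => simpa only [mk_castSucc, lift_mem_up] using hQ.orthogonal B' hB' y

lemma isSelfDualPartition_image_extendBlock (hQ : IsSelfDualPartition Q)
    {C : Finset (Fin p × Bool)} (hC : C ∈ Q) :
    IsSelfDualPartition (Q.image (extendBlock C)) where
  nonempty := forall_mem_image.2 fun B hB ↦
    (map_nonempty.2 (hQ.nonempty B hB)).mono subset_union_left
  disjoint := by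
    simp only [forall_mem_image]
    intro A hA B hB hAB
    rw [disjoint_left]
    intro w hwA hwB
    induction w using point_induction with
    | lift z =>
      exact disjoint_left.1 (hQ.disjoint A hA B hB (ne_of_apply_ne _ hAB))
        (lift_mem_extendBlock.1 hwA) (lift_mem_extendBlock.1 hwB)
    | last b =>
      exact hAB (by rw [lastPoint_mem_extendBlock.1 hwA, lastPoint_mem_extendBlock.1 hwB])
  cover w := by
    induction w using point_induction with
    | lift z =>
      obtain ⟨B, hB, hz⟩ := hQ.cover z
      exact ⟨_, mem_image_of_mem _ hB, lift_mem_extendBlock.2 hz⟩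
    | last b =>
      have : cond b C (C.image dual) ∈ Q := by cases b <;> simp [hC, hQ.image_dual_mem C hC]
      exact ⟨_, mem_image_of_mem _ this, lastPoint_mem_extendBlock.2 rfl⟩
  image_dual_mem := forall_mem_image.2 fun B hB ↦ by
    rw [image_dual_extendBlock]
    exact mem_image_of_mem _ (hQ.image_dual_mem B hB)
  orthogonal := forall_mem_image.2 fun B hB y ↦ by
    induction y using Fin.lastCases with
    | last =>
      simp only [mk_last, lastPoint_mem_extendBlock, cond_true, cond_false]
      rintro ⟨rfl, h⟩
      exact hQ.image_dual_ne hC h.symm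
    | cast y => simpa only [mk_castSucc, lift_mem_extendBlock] using hQ.orthogonal B hB y

lemma card_addLastSingletons (Q : Finset (Finset (Fin p × Bool))) :
    (addLastSingletons Q).card = Q.card + 2 := by
  have hf : {lastPoint false} ∉ Q.image up := by simp [up_ne_singleton_lastPoint]
  have ht : {lastPoint true} ∉ insert {lastPoint false} (Q.image up) := by
    simp [up_ne_singleton_lastPoint]
  rw [addLastSingletons, card_insert_of_notMem ht, card_insert_of_notMem hf,
    card_image_of_injective _ up_injective]

lemma eraseLast_addLastSingletons (hQ : ∅ ∉ Q) : eraseLast (addLastSingletons Q) = Q := by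
  simp [eraseLast, addLastSingletons, image_insert, image_image, Function.comp_def,
    erase_insert hQ]

lemma eraseLast_image_extendBlock (hQ : ∅ ∉ Q) (C : Finset (Fin p × Bool)) :
    eraseLast (Q.image (extendBlock C)) = Q := by
  simp [eraseLast, image_image, Function.comp_def, erase_eq_of_notMem hQ]

lemma singleton_lastPoint_notMem_image_extendBlock (hQ : ∅ ∉ Q) (C : Finset (Fin p × Bool))
    (b : Bool) : {lastPoint b} ∉ Q.image (extendBlock C) := by
  intro h
  obtain ⟨B, hB, hBb⟩ := mem_image.1 h
  have := congrArg down hBb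
  rw [down_extendBlock, down_singleton_lastPoint] at this
  exact hQ (this ▸ hB)

lemma eq_of_image_extendBlock_eq {Q' : Finset (Finset (Fin p × Bool))}
    {C C' : Finset (Fin p × Bool)} (hC : C ∈ Q)
    (h : Q.image (extendBlock C) = Q'.image (extendBlock C')) : C = C' := by
  obtain ⟨B, -, hB⟩ := mem_image.1 (h ▸ mem_image_of_mem (extendBlock C) hC)
  have hBC' : B = C' := by
    have : lastPoint true ∈ extendBlock C' B := hB ▸ lastPoint_mem_extendBlock.2 rfl
    simpa using lastPoint_mem_extendBlock.1 this
  rw [← down_extendBlock C C, ← hB, hBC', down_extendBlock]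

end SelfDualPartition

namespace IsSelfDualPartition

variable {p : ℕ} {P : Finset (Finset (Fin (p + 1) × Bool))} {B B₀ : Finset (Fin (p + 1) × Bool)}

lemma eq_of_lastPoint_mem (hP : IsSelfDualPartition P) (hB : B ∈ P) {b b' : Bool}
    (hb : lastPoint b ∈ B) (hb' : lastPoint b' ∈ B) : b = b' := by
  cases b <;> cases b'
  exacts [rfl, (hP.orthogonal B hB _ ⟨hb', hb⟩).elim, (hP.orthogonal B hB _ ⟨hb, hb'⟩).elim, rfl]

lemma eq_singleton_of_down_eq_empty (hP : IsSelfDualPartition P) (hB : B ∈ P)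
    (h : down B = ∅) : ∃ b, B = {lastPoint b} := by
  have hlift : ∀ z, lift z ∉ B := fun z hz ↦ notMem_empty z (h ▸ mem_down.2 hz)
  obtain ⟨w, hw⟩ := hP.nonempty B hB
  induction w using point_induction with
  | lift z => exact (hlift z hw).elim
  | last b =>
    refine ⟨b, eq_singleton_iff_unique_mem.2 ⟨hw, fun w hw' ↦ ?_⟩⟩
    induction w using point_induction with
    | lift z => exact (hlift z hw').elim
    | last b' => rw [hP.eq_of_lastPoint_mem hB hw' hw]

lemma singleton_lastPoint_mem_iff (hP : IsSelfDualPartition P) (b : Bool) :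
    {lastPoint b} ∈ P ↔ {lastPoint true} ∈ P := by
  have key : ∀ b, {lastPoint b} ∈ P → {lastPoint !b} ∈ P := fun b h ↦ by
    simpa using hP.image_dual_mem _ h
  cases b
  exacts [⟨key false, key true⟩, Iff.rfl]

lemma up_down_of_singleton_mem (hP : IsSelfDualPartition P) (ht : {lastPoint true} ∈ P)
    (hB : B ∈ P) (h : down B ≠ ∅) : up (down B) = B := by
  refine up_down fun b hb ↦ h ?_
  rw [hP.eq_of_mem_of_mem hB ((hP.singleton_lastPoint_mem_iff b).2 ht) hb (mem_singleton_self _),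
    down_singleton_lastPoint]

lemma addLastSingletons_eraseLast (hP : IsSelfDualPartition P) (ht : {lastPoint true} ∈ P) :
    addLastSingletons (eraseLast P) = P := by
  ext B
  rw [mem_addLastSingletons]
  constructor
  · rintro (⟨b, rfl⟩ | ⟨C, hC, rfl⟩)
    · exact (hP.singleton_lastPoint_mem_iff b).2 ht
    · obtain ⟨hne, B', hB', rfl⟩ := mem_eraseLast.1 hC
      rwa [hP.up_down_of_singleton_mem ht hB' hne]
  · intro hB
    by_cases h : down B = ∅
    · obtain ⟨b, rfl⟩ := hP.eq_singleton_of_down_eq_empty hB h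
      exact .inl ⟨b, rfl⟩
    · exact .inr ⟨down B, mem_eraseLast.2 ⟨h, B, hB, rfl⟩, hP.up_down_of_singleton_mem ht hB h⟩

lemma down_ne_empty (hP : IsSelfDualPartition P) (ht : {lastPoint true} ∉ P) (hB : B ∈ P) :
    down B ≠ ∅ := by
  intro h
  obtain ⟨b, rfl⟩ := hP.eq_singleton_of_down_eq_empty hB h
  exact ht ((hP.singleton_lastPoint_mem_iff b).1 hB)

lemma injOn_down (hP : IsSelfDualPartition P) (ht : {lastPoint true} ∉ P) :
    Set.InjOn down (P : Set (Finset (Fin (p + 1) × Bool))) := fun B hB B' hB' h ↦ by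
  obtain ⟨z, hz⟩ := nonempty_iff_ne_empty.2 (hP.down_ne_empty ht hB)
  exact hP.eq_of_mem_of_mem hB hB' (mem_down.1 hz) (mem_down.1 (h ▸ hz))

lemma extendBlock_down (hP : IsSelfDualPartition P) (ht : {lastPoint true} ∉ P) (hB₀ : B₀ ∈ P)
    (hB₀t : lastPoint true ∈ B₀) (hB : B ∈ P) : extendBlock (down B₀) (down B) = B := by
  ext w
  induction w using point_induction with
  | lift z => rw [lift_mem_extendBlock, mem_down]
  | last b =>
    set B₁ := cond b B₀ (B₀.image dual)
    have hB₁ : B₁ ∈ P := by cases b <;> simp [B₁, hB₀, hP.image_dual_mem B₀ hB₀]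
    have hbB₁ : lastPoint b ∈ B₁ := by cases b; exacts [mem_image_dual.2 hB₀t, hB₀t]
    rw [lastPoint_mem_extendBlock, image_dual_down, ← Bool.apply_cond down,
      (hP.injOn_down ht).eq_iff hB hB₁]
    exact ⟨fun h ↦ h ▸ hbB₁, fun h ↦ hP.eq_of_mem_of_mem hB hB₁ h hbB₁⟩

lemma image_extendBlock_eraseLast (hP : IsSelfDualPartition P) (ht : {lastPoint true} ∉ P)
    (hB₀ : B₀ ∈ P) (hB₀t : lastPoint true ∈ B₀) :
    (eraseLast P).image (extendBlock (down B₀)) = P := by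
  have hempty : ∅ ∉ P.image down := by
    simpa using fun B hB ↦ hP.down_ne_empty ht hB
  rw [eraseLast, erase_eq_of_notMem hempty, image_image]
  exact (image_congr fun B hB ↦ hP.extendBlock_down ht hB₀ hB₀t hB).trans image_id

end IsSelfDualPartition

namespace SelfDualPartition

open Classical in
noncomputable def selfDualPartitions (α : Type*) [Fintype α] [DecidableEq α] (k : ℕ) :
    Finset (Finset (Finset (α × Bool))) :=
  univ.filter fun P ↦ P.card = 2 * k ∧ IsSelfDualPartition P

section

variable (α : Type*) [Fintype α] [DecidableEq α]

@[simp]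
lemma mem_selfDualPartitions {k : ℕ} {P : Finset (Finset (α × Bool))} :
    P ∈ selfDualPartitions α k ↔ P.card = 2 * k ∧ IsSelfDualPartition P := by
  simp [selfDualPartitions]

lemma selfDualPartitions_of_isEmpty [IsEmpty α] (k : ℕ) :
    selfDualPartitions α k = if k = 0 then {∅} else ∅ := by
  ext P
  have hP : IsSelfDualPartition P ↔ P = ∅ := by
    refine ⟨IsSelfDualPartition.eq_empty, fun h ↦ ?_⟩
    subst h
    exact ⟨by simp, by simp, fun z ↦ isEmptyElim z.1, by simp, by simp⟩
  rw [mem_selfDualPartitions, hP]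
  split_ifs with hk
  · simp [hk]
  · simp only [notMem_empty, iff_false, not_and]
    rintro hcard rfl
    simp [eq_comm, hk] at hcard

lemma selfDualPartitions_zero [Nonempty α] : selfDualPartitions α 0 = ∅ := by
  refine eq_empty_of_forall_notMem fun P hP ↦ ?_
  obtain ⟨hcard, hP⟩ := (mem_selfDualPartitions α).1 hP
  obtain ⟨B, hB, -⟩ := hP.cover (Classical.arbitrary α, true)
  simp_all

end

variable {p q : ℕ}

lemma card_filter_singleton_lastPoint_mem :
    ((selfDualPartitions (Fin (p + 1)) (q + 1)).filter ({lastPoint true} ∈ ·)).card =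
      (selfDualPartitions (Fin p) q).card := by
  refine card_bij' (fun P _ ↦ eraseLast P) (fun Q _ ↦ addLastSingletons Q) ?_ ?_ ?_ ?_
  · simp only [mem_filter, mem_selfDualPartitions, and_imp]
    intro P hcard hP ht
    refine ⟨?_, isSelfDualPartition_eraseLast hP⟩
    have := card_addLastSingletons (eraseLast P)
    rw [hP.addLastSingletons_eraseLast ht] at this
    omega
  · simp only [mem_filter, mem_selfDualPartitions, and_imp]
    intro Q hcard hQ
    refine ⟨⟨?_, isSelfDualPartition_addLastSingletons hQ⟩, mem_insert_self _ _⟩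
    rw [card_addLastSingletons, hcard, mul_add_one]
  · simp only [mem_filter, mem_selfDualPartitions, and_imp]
    intro P _ hP ht
    exact hP.addLastSingletons_eraseLast ht
  · simp only [mem_selfDualPartitions, and_imp]
    intro Q _ hQ
    exact eraseLast_addLastSingletons hQ.empty_notMem

lemma card_filter_singleton_lastPoint_notMem_eq_card_sigma :
    ((selfDualPartitions (Fin (p + 1)) (q + 1)).filter ({lastPoint true} ∉ ·)).card =
      ((selfDualPartitions (Fin p) (q + 1)).sigma id).card := by
  refine (card_bij (fun QC _ ↦ QC.1.image (extendBlock QC.2)) ?_ ?_ ?_).symm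
  · simp only [Sigma.forall, mem_sigma, id, mem_filter, mem_selfDualPartitions, and_imp]
    intro Q C hcard hQ hC
    refine ⟨⟨?_, isSelfDualPartition_image_extendBlock hQ hC⟩,
      singleton_lastPoint_notMem_image_extendBlock hQ.empty_notMem C true⟩
    rw [card_image_of_injective _ (extendBlock_injective C), hcard]
  · simp only [Sigma.forall, mem_sigma, id, mem_selfDualPartitions, and_imp]
    intro Q C _ hQ hC Q' C' _ hQ' _ h
    obtain rfl : Q = Q' := by
      rw [← eraseLast_image_extendBlock hQ.empty_notMem C, h,
        eraseLast_image_extendBlock hQ'.empty_notMem]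
    obtain rfl := eq_of_image_extendBlock_eq hC h
    rfl
  · simp only [mem_filter, mem_selfDualPartitions, mem_sigma, id, and_imp]
    intro P hcard hP ht
    obtain ⟨B₀, hB₀, hB₀t⟩ := hP.cover (lastPoint true)
    have hP_eq := hP.image_extendBlock_eraseLast ht hB₀ hB₀t
    refine ⟨⟨eraseLast P, down B₀⟩, ⟨⟨?_, isSelfDualPartition_eraseLast hP⟩, ?_⟩, hP_eq⟩
    · have := card_image_of_injective (eraseLast P) (extendBlock_injective (down B₀))
      rw [hP_eq, hcard] at this
      exact this.symm
    · exact mem_eraseLast.2 ⟨hP.down_ne_empty ht hB₀, B₀, hB₀, rfl⟩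

lemma card_selfDualPartitions_succ_succ :
    (selfDualPartitions (Fin (p + 1)) (q + 1)).card =
      (selfDualPartitions (Fin p) q).card +
        2 * (q + 1) * (selfDualPartitions (Fin p) (q + 1)).card := by
  have hsigma : ((selfDualPartitions (Fin p) (q + 1)).sigma id).card =
      2 * (q + 1) * (selfDualPartitions (Fin p) (q + 1)).card := by
    simp only [card_sigma, id]
    rw [sum_congr rfl fun Q hQ ↦ ((mem_selfDualPartitions _).1 hQ).1, sum_const,
      smul_eq_mul, mul_comm]
  rw [← card_filter_add_card_filter_not ({lastPoint true} ∈ ·),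
    card_filter_singleton_lastPoint_mem, card_filter_singleton_lastPoint_notMem_eq_card_sigma,
    hsigma]

theorem card_selfDualPartitions_fin :
    ∀ p q : ℕ, (selfDualPartitions (Fin p) q).card = 2 ^ (p - q) * stirling p q
  | 0, q => by cases q <;> simp [selfDualPartitions_of_isEmpty, stirling]
  | p + 1, 0 => by simp [selfDualPartitions_zero, stirling]
  | p + 1, q + 1 => by
    rw [card_selfDualPartitions_succ_succ, card_selfDualPartitions_fin p q,
      card_selfDualPartitions_fin p (q + 1), stirling, Nat.add_sub_add_right]
    rcases lt_or_ge p (q + 1) with h | h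
    · rw [stirling_eq_stirlingSecond_s13 p (q + 1), Nat.stirlingSecond_eq_zero_of_lt h]
      ring
    · rw [show p - q = p - (q + 1) + 1 by omega, pow_succ]
      ring

end SelfDualPartition

/-- `a_{p,q}`, the number of self-dual partitions of `Y ∪ Y'` (modelled as
`Fin p × Bool`, with duality `(y, b) ↦ (y, ¬b)`) into `2q` blocks which are
orthogonal to the matching `{y, y'}`, equals `2^{p-q}·S(p,q)`. -/
theorem stmt13 (p q : ℕ) :
    Nat.card {P : Finset (Finset (Fin p × Bool)) //
      P.card = 2 * q ∧ (∀ B ∈ P, B.Nonempty) ∧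
      (∀ A ∈ P, ∀ B ∈ P, A ≠ B → Disjoint A B) ∧
      (∀ z : Fin p × Bool, ∃ B ∈ P, z ∈ B) ∧
      (∀ B ∈ P, B.image (fun z => (z.1, !z.2)) ∈ P) ∧
      (∀ B ∈ P, ∀ y : Fin p, ¬((y, true) ∈ B ∧ (y, false) ∈ B))} =
    2 ^ (p - q) * stirling p q := by
  rw [← SelfDualPartition.card_selfDualPartitions_fin, ← Nat.card_eq_finsetCard]
  refine Nat.card_congr (Equiv.subtypeEquivRight fun P ↦ ?_)
  rw [SelfDualPartition.mem_selfDualPartitions]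
  exact ⟨fun ⟨hcard, h₁, h₂, h₃, h₄, h₅⟩ ↦ ⟨hcard, h₁, h₂, h₃, h₄, h₅⟩,
    fun ⟨hcard, h₁, h₂, h₃, h₄, h₅⟩ ↦ ⟨hcard, h₁, h₂, h₃, h₄, h₅⟩⟩
end

section
/- For a fixed number r of generators, the number of 3-nilpotent semigroups of rank r, counted up to presentation (i.e., the number of admissible partial partitions of X × X with X of size r, of any rank k ≥ 1), equals B_{r²+1} − 1, where B_m is the m-th Bell number. -/
/-- Bell numbers: `B_m = ∑_k S(m,k)`. -/
def bell (m : ℕ) : ℕ := ∑ k ∈ Finset.range (m + 1), stirling m k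

open Finset
variable {α : Type*} [DecidableEq α]

section defs
def partialparts (s : Finset α) : Finset (Finset (Finset α)) :=
  s.powerset.powerset.filter (fun P => (∀ B ∈ P, B.Nonempty) ∧ ∀ A ∈ P, ∀ B ∈ P, A ≠ B → Disjoint A B)

def fullparts (s : Finset α) : Finset (Finset (Finset α)) :=
  (partialparts s).filter (fun P => P.biUnion id = s)

def kparts (s : Finset α) (k : ℕ) : Finset (Finset (Finset α)) :=
  (fullparts s).filter (fun P => P.card = k)
end defs

lemma mem_partialparts {s : Finset α} {P : Finset (Finset α)} :
    P ∈ partialparts s ↔ (∀ B ∈ P, B ⊆ s) ∧ (∀ B ∈ P, B.Nonempty) ∧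
      ∀ A ∈ P, ∀ B ∈ P, A ≠ B → Disjoint A B := by
  simp [partialparts, Finset.subset_iff, and_assoc]

lemma mem_fullparts {s : Finset α} {P : Finset (Finset α)} :
    P ∈ fullparts s ↔ ((∀ B ∈ P, B.Nonempty) ∧
      (∀ A ∈ P, ∀ B ∈ P, A ≠ B → Disjoint A B)) ∧ P.biUnion id = s := by
  constructor
  · intro h
    rw [fullparts, mem_filter, mem_partialparts] at h
    tauto
  · rintro ⟨⟨h1, h2⟩, h3⟩
    rw [fullparts, mem_filter, mem_partialparts]
    refine ⟨⟨fun B hB => h3 ▸ ?_, h1, h2⟩, h3⟩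
    exact subset_biUnion_of_mem id hB

lemma mem_kparts {s : Finset α} {P : Finset (Finset α)} {k : ℕ} :
    P ∈ kparts s k ↔ P ∈ fullparts s ∧ P.card = k := by
  simp [kparts]

lemma block_subset {s : Finset α} {P : Finset (Finset α)} (hP : P ∈ fullparts s)
    {B : Finset α} (hB : B ∈ P) : B ⊆ s := by
  rw [mem_fullparts] at hP
  exact hP.2 ▸ subset_biUnion_of_mem id hB

/-- the block of `P` containing `a` -/
def ablock (P : Finset (Finset α)) (a : α) : Finset α :=
  (P.filter (fun B => a ∈ B)).biUnion id

lemma ablock_spec {s : Finset α} {P : Finset (Finset α)} {a : α}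
    (hP : P ∈ fullparts s) (ha : a ∈ s) :
    ablock P a ∈ P ∧ a ∈ ablock P a ∧ ∀ B ∈ P, a ∈ B → B = ablock P a := by
  rw [mem_fullparts] at hP
  obtain ⟨⟨h1, h2⟩, h3⟩ := hP
  rw [← h3, mem_biUnion] at ha
  obtain ⟨C, hC, haC⟩ := ha
  have hfil : P.filter (fun B => a ∈ B) = {C} := by
    ext B
    simp only [mem_filter, mem_singleton]
    constructor
    · rintro ⟨hB, haB⟩
      by_contra hne
      exact (Finset.disjoint_left.mp (h2 B hB C hC hne)) haB haC
    · rintro rfl; exact ⟨hC, haC⟩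
  have hab : ablock P a = C := by rw [ablock, hfil, singleton_biUnion]; rfl
  rw [hab]
  exact ⟨hC, haC, fun B hB haB => by
    by_contra hne
    exact (Finset.disjoint_left.mp (h2 B hB C hC hne)) haB haC⟩

section T1

lemma erase_singleton_mem {s : Finset α} {a : α} (ha : a ∉ s) {P : Finset (Finset α)} {k : ℕ}
    (hP : P ∈ kparts (insert a s) (k+1)) (haP : {a} ∈ P) :
    P.erase {a} ∈ kparts s k := by
  rw [mem_kparts, mem_fullparts] at hP ⊢
  obtain ⟨⟨⟨h1, h2⟩, h3⟩, h4⟩ := hP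
  have hanotB : ∀ B ∈ P, B ≠ ({a} : Finset α) → a ∉ B := fun B hB hne hab =>
    (Finset.disjoint_left.mp (h2 B hB {a} haP hne)) hab (mem_singleton_self a)
  refine ⟨⟨⟨fun B hB => h1 B (mem_of_mem_erase hB),
      fun A hA B hB h => h2 A (mem_of_mem_erase hA) B (mem_of_mem_erase hB) h⟩, ?_⟩, ?_⟩
  · ext x
    simp only [mem_biUnion, id]
    constructor
    · rintro ⟨B, hB, hxB⟩
      have hBP := mem_of_mem_erase hB
      have hxins : x ∈ insert a s := h3 ▸ mem_biUnion.mpr ⟨B, hBP, hxB⟩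
      rcases mem_insert.mp hxins with rfl | hxs
      · exact absurd hxB (hanotB B hBP (ne_of_mem_erase hB))
      · exact hxs
    · intro hxs
      have hx : x ∈ P.biUnion id := h3 ▸ mem_insert_of_mem hxs
      obtain ⟨B, hB, hxB⟩ := mem_biUnion.mp hx
      refine ⟨B, mem_erase.mpr ⟨?_, hB⟩, hxB⟩
      rintro rfl
      rw [id, mem_singleton] at hxB; subst hxB; exact ha hxs
  · rw [card_erase_of_mem haP, h4]; rfl

lemma insert_singleton_mem {s : Finset α} {a : α} (ha : a ∉ s) {Q : Finset (Finset α)} {k : ℕ}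
    (hQ : Q ∈ kparts s k) : insert ({a} : Finset α) Q ∈ kparts (insert a s) (k+1) ∧ ({a} : Finset α) ∉ Q := by
  have haQ : ({a} : Finset α) ∉ Q := fun h => ha (block_subset (mem_kparts.mp hQ).1 h (mem_singleton_self a))
  rw [mem_kparts, mem_fullparts] at hQ ⊢
  obtain ⟨⟨⟨h1, h2⟩, h3⟩, h4⟩ := hQ
  have hanot : ∀ B ∈ Q, a ∉ B := fun B hB hab => ha (h3 ▸ mem_biUnion.mpr ⟨B, hB, hab⟩)
  refine ⟨⟨⟨⟨?_, ?_⟩, ?_⟩, ?_⟩, haQ⟩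
  · intro B hB
    rcases mem_insert.mp hB with rfl | hB
    · exact singleton_nonempty a
    · exact h1 B hB
  · intro A hA B hB hne
    rcases mem_insert.mp hA with rfl | hA <;> rcases mem_insert.mp hB with rfl | hB
    · exact absurd rfl hne
    · exact Finset.disjoint_singleton_left.mpr (hanot B hB)
    · exact Finset.disjoint_singleton_right.mpr (hanot A hA)
    · exact h2 A hA B hB hne
  · rw [biUnion_insert, h3]; rfl
  · rw [card_insert_of_notMem haQ, h4]

lemma T1_card {s : Finset α} {a : α} (ha : a ∉ s) (k : ℕ) :
    ((kparts (insert a s) (k+1)).filter (fun P => ({a} : Finset α) ∈ P)).card = (kparts s k).card := by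
  apply card_bij' (fun P _ => P.erase {a}) (fun Q _ => insert {a} Q)
  · intro P hP
    rw [mem_filter] at hP
    exact insert_erase hP.2
  · intro Q hQ
    exact erase_insert (insert_singleton_mem ha hQ).2
  · intro P hP
    rw [mem_filter] at hP
    exact erase_singleton_mem ha hP.1 hP.2
  · intro Q hQ
    obtain ⟨h1, h2⟩ := insert_singleton_mem ha hQ
    exact mem_filter.mpr ⟨h1, mem_insert_self _ _⟩
end T1

section T2
variable {s : Finset α} {a : α}

/-- forward map data -/
lemma fwd_mem (ha : a ∉ s) {P : Finset (Finset α)} {k : ℕ}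
    (hP : P ∈ kparts (insert a s) (k+1)) (haP : ({a} : Finset α) ∉ P) :
    P.image (fun B => B.erase a) ∈ kparts s (k+1) ∧
      (ablock P a).erase a ∈ P.image (fun B => B.erase a) := by
  obtain ⟨hPf, h4⟩ := mem_kparts.mp hP
  obtain ⟨hC, haC, hCu⟩ := ablock_spec hPf (mem_insert_self a s)
  obtain ⟨⟨h1, h2⟩, h3⟩ := mem_fullparts.mp hPf
  have hanot : ∀ B ∈ P, B ≠ ablock P a → a ∉ B := fun B hB hne hab => hne (hCu B hB hab)
  have hid : ∀ B ∈ P, B ≠ ablock P a → B.erase a = B := fun B hB hne =>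
    erase_eq_of_notMem (hanot B hB hne)
  have hinj : Set.InjOn (fun B => B.erase a) (P : Set (Finset α)) := by
    have key : ∀ X ∈ P, ∀ Y ∈ P, X ≠ Y → X.erase a = Y.erase a → X ≠ ablock P a → False := by
      intro X hX Y hY hXY hE hX'
      rw [hid X hX hX'] at hE
      obtain ⟨x, hx⟩ := h1 X hX
      have hxY : x ∈ Y := erase_subset a Y (hE ▸ hx)
      exact (Finset.disjoint_left.mp (h2 X hX Y hY hXY)) hx hxY
    intro A hA B hB hAB
    simp only [Finset.mem_coe] at hA hB
    simp only at hAB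
    by_contra hne
    rcases ne_or_eq A (ablock P a) with hA' | hA2
    · exact key A hA B hB hne hAB hA'
    · have hB' : B ≠ ablock P a := fun h => hne (hA2.trans h.symm)
      exact key B hB A hA (Ne.symm hne) hAB.symm hB'
  have hCne : ((ablock P a).erase a).Nonempty := by
    obtain ⟨b, hb⟩ := h1 _ hC
    rcases eq_or_ne b a with heq | hba
    · by_contra hemp
      rw [not_nonempty_iff_eq_empty] at hemp
      apply haP
      have : ablock P a = {a} := by
        apply eq_singleton_iff_unique_mem.mpr
        refine ⟨haC, fun x hx => ?_⟩
        by_contra hxa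
        exact absurd (mem_erase.mpr ⟨hxa, hx⟩) (hemp ▸ notMem_empty x)
      rwa [← this]
    · exact ⟨b, mem_erase.mpr ⟨hba, hb⟩⟩
  refine ⟨mem_kparts.mpr ⟨mem_fullparts.mpr ⟨⟨?_, ?_⟩, ?_⟩, ?_⟩, mem_image_of_mem _ hC⟩
  · intro B' hB'
    obtain ⟨B, hB, rfl⟩ := mem_image.mp hB'
    rcases eq_or_ne B (ablock P a) with rfl | hne
    · exact hCne
    · rw [hid B hB hne]; exact h1 B hB
  · intro A' hA' B' hB' hne'
    obtain ⟨A, hA, rfl⟩ := mem_image.mp hA'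
    obtain ⟨B, hB, rfl⟩ := mem_image.mp hB'
    have hne : A ≠ B := fun h => hne' (by rw [h])
    exact disjoint_of_subset_left (erase_subset a A)
      (disjoint_of_subset_right (erase_subset a B) (h2 A hA B hB hne))
  · ext x
    simp only [mem_biUnion, mem_image, id]
    constructor
    · rintro ⟨B', ⟨B, hB, rfl⟩, hx⟩
      have hxB := erase_subset a B hx
      have hxa : x ≠ a := ne_of_mem_erase hx
      have : x ∈ insert a s := h3 ▸ mem_biUnion.mpr ⟨B, hB, hxB⟩
      exact (mem_insert.mp this).resolve_left hxa
    · intro hx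
      have hxa : x ≠ a := fun h => ha (h ▸ hx)
      have : x ∈ P.biUnion id := h3 ▸ mem_insert_of_mem hx
      obtain ⟨B, hB, hxB⟩ := mem_biUnion.mp this
      exact ⟨B.erase a, ⟨B, hB, rfl⟩, mem_erase.mpr ⟨hxa, hxB⟩⟩
  · rw [card_image_of_injOn hinj, h4]

/-- backward map data -/
lemma bwd_mem (ha : a ∉ s) {Q : Finset (Finset α)} {C : Finset α} {k : ℕ}
    (hQ : Q ∈ kparts s (k+1)) (hC : C ∈ Q) :
    insert (insert a C) (Q.erase C) ∈ kparts (insert a s) (k+1) ∧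
      ({a} : Finset α) ∉ insert (insert a C) (Q.erase C) ∧
      ablock (insert (insert a C) (Q.erase C)) a = insert a C := by
  obtain ⟨hQf, h4⟩ := mem_kparts.mp hQ
  obtain ⟨⟨h1, h2⟩, h3⟩ := mem_fullparts.mp hQf
  have hbs : ∀ B ∈ Q, B ⊆ s := fun B hB => block_subset hQf hB
  have hanot : ∀ B ∈ Q, a ∉ B := fun B hB hab => ha (hbs B hB hab)
  have hnotmem : insert a C ∉ Q.erase C := fun h =>
    hanot _ (mem_of_mem_erase h) (mem_insert_self a C)
  have hmem : insert (insert a C) (Q.erase C) ∈ kparts (insert a s) (k+1) := by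
    refine mem_kparts.mpr ⟨mem_fullparts.mpr ⟨⟨?_, ?_⟩, ?_⟩, ?_⟩
    · intro B hB
      rcases mem_insert.mp hB with rfl | hB
      · exact insert_nonempty a C
      · exact h1 B (mem_of_mem_erase hB)
    · intro A hA B hB hne
      rcases mem_insert.mp hA with rfl | hA <;> rcases mem_insert.mp hB with rfl | hB
      · exact absurd rfl hne
      · rw [Finset.disjoint_insert_left]
        exact ⟨hanot B (mem_of_mem_erase hB),
          h2 C hC B (mem_of_mem_erase hB) (fun h => (mem_erase.mp hB).1 h.symm)⟩
      · rw [Finset.disjoint_insert_right]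
        exact ⟨hanot A (mem_of_mem_erase hA),
          h2 A (mem_of_mem_erase hA) C hC (mem_erase.mp hA).1⟩
      · exact h2 A (mem_of_mem_erase hA) B (mem_of_mem_erase hB)
          (fun h => hne h)
    · have hcu : C ∪ (Q.erase C).biUnion id = s := by
        conv_rhs => rw [← h3, ← insert_erase hC]
        rw [biUnion_insert]; rfl
      rw [biUnion_insert]
      simp only [id_eq]
      rw [insert_union, hcu]
    · rw [card_insert_of_notMem hnotmem, card_erase_of_mem hC, h4]
      omega
  refine ⟨hmem, ?_, ?_⟩
  · intro h
    rcases mem_insert.mp h with h' | h'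
    · obtain ⟨b, hb⟩ := h1 C hC
      have : b ∈ ({a} : Finset α) := h' ▸ mem_insert_of_mem hb
      rw [mem_singleton] at this
      exact ha (this ▸ hbs C hC hb)
    · exact hanot _ (mem_of_mem_erase h') (mem_singleton_self a)
  · exact ((ablock_spec (mem_kparts.mp hmem).1 (mem_insert_self a s)).2.2 _
      (mem_insert_self _ _) (mem_insert_self a C)).symm

lemma T2_card (ha : a ∉ s) (k : ℕ) :
    ((kparts (insert a s) (k+1)).filter (fun P => ({a} : Finset α) ∉ P)).card
      = (k+1) * (kparts s (k+1)).card := by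
  have hcard : (((kparts s (k+1)).sigma (fun Q => Q)).card) = (k+1) * (kparts s (k+1)).card := by
    rw [card_sigma]
    rw [Finset.sum_congr rfl (fun Q hQ => (mem_kparts.mp hQ).2), Finset.sum_const, smul_eq_mul,
      mul_comm]
  rw [← hcard]
  apply card_bij' (fun P _ => (⟨P.image (fun B => B.erase a), (ablock P a).erase a⟩ :
      Σ _ : Finset (Finset α), Finset α))
    (fun x _ => insert (insert a x.2) (x.1.erase x.2))
  · -- i maps into sigma
    intro P hP
    rw [mem_filter] at hP
    obtain ⟨h1, h2⟩ := fwd_mem ha hP.1 hP.2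
    simp only [mem_sigma]
    exact ⟨h1, h2⟩
  · -- j maps into filter
    rintro ⟨Q, C⟩ hx
    rw [mem_sigma] at hx
    obtain ⟨hQ, hC⟩ := hx
    replace hQ : Q ∈ kparts s (k+1) := hQ
    replace hC : C ∈ Q := hC
    obtain ⟨hmem, hnota, _⟩ := bwd_mem ha hQ hC
    show insert (insert a C) (Q.erase C) ∈ _
    exact mem_filter.mpr ⟨hmem, hnota⟩
  · -- left inverse : j (i P) = P
    intro P hP
    rw [mem_filter] at hP
    obtain ⟨hPk, haP⟩ := hP
    obtain ⟨hPf, h4⟩ := mem_kparts.mp hPk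
    obtain ⟨hC, haC, hCu⟩ := ablock_spec hPf (mem_insert_self a s)
    obtain ⟨⟨h1, h2⟩, h3⟩ := mem_fullparts.mp hPf
    have hid : ∀ B ∈ P, B ≠ ablock P a → B.erase a = B := fun B hB hne =>
      erase_eq_of_notMem (fun hab => hne (hCu B hB hab))
    show insert (insert a ((ablock P a).erase a))
      ((P.image (fun B => B.erase a)).erase ((ablock P a).erase a)) = P
    have himg : P.image (fun B => B.erase a)
        = insert ((ablock P a).erase a) (P.erase (ablock P a)) := by
      conv_lhs => rw [← insert_erase hC]
      rw [image_insert]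
      congr 1
      apply Finset.image_congr (fun B hB => hid B (mem_of_mem_erase hB) (ne_of_mem_erase hB))
        |>.trans (image_id)
    rw [himg, insert_erase haC]
    rw [erase_insert ?hne, insert_erase hC]
    case hne =>
      intro hmem
      have hBP := mem_of_mem_erase hmem
      have hne := ne_of_mem_erase hmem
      obtain ⟨x, hx⟩ := h1 _ hBP
      exact (Finset.disjoint_left.mp (h2 _ hBP _ hC hne)) hx (erase_subset a _ hx)
  · -- right inverse: i (j x) = x
    rintro ⟨Q, C⟩ hx
    rw [mem_sigma] at hx
    obtain ⟨hQ, hC⟩ := hx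
    replace hQ : Q ∈ kparts s (k+1) := hQ
    replace hC : C ∈ Q := hC
    obtain ⟨hmem, hnota, habl⟩ := bwd_mem ha hQ hC
    obtain ⟨hQf, h4⟩ := mem_kparts.mp hQ
    obtain ⟨⟨h1, h2⟩, h3⟩ := mem_fullparts.mp hQf
    have haC : a ∉ C := fun h => ha (block_subset hQf hC h)
    have hanot : ∀ B ∈ Q, a ∉ B := fun B hB hab => ha (block_subset hQf hB hab)
    show (⟨(insert (insert a C) (Q.erase C)).image (fun B => B.erase a),
      (ablock (insert (insert a C) (Q.erase C)) a).erase a⟩ :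
      Σ _ : Finset (Finset α), Finset α) = ⟨Q, C⟩
    rw [habl, erase_insert haC]
    have himg : (insert (insert a C) (Q.erase C)).image (fun B => B.erase a) = Q := by
      rw [image_insert, erase_insert haC]
      have : (Q.erase C).image (fun B => B.erase a) = Q.erase C :=
        (Finset.image_congr (fun B hB =>
          erase_eq_of_notMem (hanot B (mem_of_mem_erase hB)))).trans image_id
      rw [this, insert_erase hC]
    rw [himg]
end T2

lemma kparts_rec {s : Finset α} {a : α} (ha : a ∉ s) (k : ℕ) :
    (kparts (insert a s) (k+1)).card
      = (kparts s k).card + (k+1) * (kparts s (k+1)).card := by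
  rw [← T1_card ha k, ← T2_card ha k]
  exact (card_filter_add_card_filter_not (p := fun P => ({a} : Finset α) ∈ P)).symm

lemma kparts_empty_zero : (kparts (∅ : Finset α) 0) = {(∅ : Finset (Finset α))} := by
  ext P
  rw [mem_kparts, mem_fullparts, mem_singleton]
  constructor
  · rintro ⟨_, h4⟩
    exact card_eq_zero.mp h4
  · rintro rfl
    simp

lemma kparts_empty_succ (k : ℕ) : (kparts (∅ : Finset α) (k+1)) = ∅ := by
  ext P
  simp only [mem_kparts, mem_fullparts, notMem_empty, iff_false]
  rintro ⟨⟨⟨h1, _⟩, h3⟩, h4⟩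
  have hpos : 0 < P.card := by rw [h4]; exact Nat.succ_pos k
  obtain ⟨B, hB⟩ := card_pos.mp hpos
  obtain ⟨x, hx⟩ := h1 B hB
  exact notMem_empty x (h3 ▸ mem_biUnion.mpr ⟨B, hB, hx⟩)

lemma kparts_nonempty_zero {s : Finset α} (hs : s.Nonempty) : kparts s 0 = ∅ := by
  ext P
  simp only [mem_kparts, mem_fullparts, notMem_empty, iff_false]
  rintro ⟨⟨_, h3⟩, h4⟩
  rw [card_eq_zero.mp h4] at h3
  simp only [biUnion_empty] at h3
  exact hs.ne_empty h3.symm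

lemma kparts_card (s : Finset α) : ∀ k, (kparts s k).card = stirling s.card k := by
  induction s using Finset.induction_on with
  | empty =>
    intro k
    cases k with
    | zero => rw [kparts_empty_zero]; rfl
    | succ k => rw [kparts_empty_succ]; rfl
  | @insert a s ha ih =>
    intro k
    cases k with
    | zero =>
      rw [kparts_nonempty_zero (insert_nonempty a s), card_insert_of_notMem ha]
      rfl
    | succ k =>
      rw [kparts_rec ha k, ih k, ih (k+1), card_insert_of_notMem ha]
      rfl

lemma card_le_of_fullparts {s : Finset α} {P : Finset (Finset α)}
    (hP : P ∈ fullparts s) : P.card ≤ s.card := by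
  obtain ⟨⟨h1, h2⟩, h3⟩ := mem_fullparts.mp hP
  calc P.card = ∑ B ∈ P, 1 := by rw [Finset.sum_const, smul_eq_mul, mul_one]
  _ ≤ ∑ B ∈ P, B.card := Finset.sum_le_sum (fun B hB => card_pos.mpr (h1 B hB))
  _ = (P.biUnion id).card := (card_biUnion (fun A hA B hB h => h2 A hA B hB h)).symm
  _ = s.card := by rw [h3]

lemma fullparts_card (s : Finset α) : (fullparts s).card = bell s.card := by
  have h : ∀ P ∈ fullparts s, P.card ∈ Finset.range (s.card + 1) :=
    fun P hP => mem_range.mpr (Nat.lt_succ_of_le (card_le_of_fullparts hP))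
  rw [card_eq_sum_card_fiberwise h, bell]
  exact Finset.sum_congr rfl fun k _ => kparts_card s k

lemma pp_fwd_mem {s : Finset α} {a : α} (ha : a ∉ s) {P : Finset (Finset α)}
    (hP : P ∈ partialparts s) :
    insert ((insert a s) \ P.biUnion id) P ∈ fullparts (insert a s) ∧
      ((insert a s) \ P.biUnion id) ∉ P ∧ a ∈ (insert a s) \ P.biUnion id := by
  obtain ⟨hsub, h1, h2⟩ := mem_partialparts.mp hP
  have hbi : P.biUnion id ⊆ s := by
    intro x hx
    obtain ⟨B, hB, hxB⟩ := mem_biUnion.mp hx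
    exact hsub B hB hxB
  have haD : a ∈ (insert a s) \ P.biUnion id :=
    mem_sdiff.mpr ⟨mem_insert_self a s, fun h => ha (hbi h)⟩
  have hDP : (insert a s) \ P.biUnion id ∉ P := fun h => ha (hsub _ h haD)
  refine ⟨mem_fullparts.mpr ⟨⟨?_, ?_⟩, ?_⟩, hDP, haD⟩
  · intro B hB
    rcases mem_insert.mp hB with rfl | hB
    · exact ⟨a, haD⟩
    · exact h1 B hB
  · intro A hA B hB hne
    have hdisj : ∀ B ∈ P, Disjoint ((insert a s) \ P.biUnion id) B := by
      intro B hB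
      rw [Finset.disjoint_left]
      intro x hx hxB
      exact (mem_sdiff.mp hx).2 (mem_biUnion.mpr ⟨B, hB, hxB⟩)
    rcases mem_insert.mp hA with rfl | hA <;> rcases mem_insert.mp hB with rfl | hB
    · exact absurd rfl hne
    · exact hdisj B hB
    · exact (hdisj A hA).symm
    · exact h2 A hA B hB hne
  · rw [biUnion_insert]
    simp only [id_eq]
    exact sdiff_union_of_subset (hbi.trans (subset_insert a s))

lemma partialparts_card_eq {s : Finset α} {a : α} (ha : a ∉ s) :
    (partialparts s).card = (fullparts (insert a s)).card := by
  refine card_bij' (fun P _ => insert ((insert a s) \ P.biUnion id) P)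
    (fun Q _ => Q.erase (ablock Q a)) ?hi ?hj ?left ?right
  case hi =>
    intro P hP
    exact (pp_fwd_mem ha hP).1
  case hj =>
    intro Q hQ
    obtain ⟨hC, haC, hCu⟩ := ablock_spec hQ (mem_insert_self a s)
    obtain ⟨⟨h1, h2⟩, h3⟩ := mem_fullparts.mp hQ
    refine mem_partialparts.mpr ⟨?_, ?_, ?_⟩
    · intro B hB x hx
      have hBQ := mem_of_mem_erase hB
      have hxins : x ∈ insert a s := block_subset hQ hBQ hx
      rcases mem_insert.mp hxins with rfl | hxs
      · exact absurd (hCu B hBQ hx) (ne_of_mem_erase hB)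
      · exact hxs
    · exact fun B hB => h1 B (mem_of_mem_erase hB)
    · exact fun A hA B hB hne => h2 A (mem_of_mem_erase hA) B (mem_of_mem_erase hB) hne
  case left =>
    intro P hP
    obtain ⟨hmem, hDP, haD⟩ := pp_fwd_mem ha hP
    have hD : (insert a s) \ P.biUnion id = ablock (insert ((insert a s) \ P.biUnion id) P) a :=
      (ablock_spec hmem (mem_insert_self a s)).2.2 _ (mem_insert_self _ _) haD
    show (insert ((insert a s) \ P.biUnion id) P).erase
      (ablock (insert ((insert a s) \ P.biUnion id) P) a) = P
    rw [← hD, erase_insert hDP]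
  case right =>
    intro Q hQ
    obtain ⟨hC, haC, hCu⟩ := ablock_spec hQ (mem_insert_self a s)
    obtain ⟨⟨h1, h2⟩, h3⟩ := mem_fullparts.mp hQ
    have hD : (insert a s) \ (Q.erase (ablock Q a)).biUnion id = ablock Q a := by
      ext x
      rw [mem_sdiff, mem_biUnion]
      constructor
      · rintro ⟨hxins, hnx⟩
        have hx : x ∈ Q.biUnion id := h3 ▸ hxins
        obtain ⟨B, hB, hxB⟩ := mem_biUnion.mp hx
        rcases eq_or_ne B (ablock Q a) with rfl | hne
        · exact hxB
        · exact absurd ⟨B, mem_erase.mpr ⟨hne, hB⟩, hxB⟩ hnx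
      · intro hx
        refine ⟨h3 ▸ mem_biUnion.mpr ⟨_, hC, hx⟩, ?_⟩
        rintro ⟨B, hB, hxB⟩
        exact (Finset.disjoint_left.mp
          (h2 _ hC B (mem_of_mem_erase hB) (fun h => (mem_erase.mp hB).1 h.symm))) hx hxB
    show insert ((insert a s) \ (Q.erase (ablock Q a)).biUnion id) (Q.erase (ablock Q a)) = Q
    rw [hD, insert_erase hC]

lemma partialparts_map_card {γ : Type*} [DecidableEq γ] [Fintype γ] (e : γ ↪ α) :
    (partialparts ((univ : Finset γ).map e)).card = (partialparts (univ : Finset γ)).card := by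
  classical
  symm
  apply card_bij (fun P _ => P.image (fun B => B.map e))
  · intro P hP
    obtain ⟨_, h1, h2⟩ := mem_partialparts.mp hP
    refine mem_partialparts.mpr ⟨?_, ?_, ?_⟩
    · rintro B' hB'
      obtain ⟨B, hB, rfl⟩ := mem_image.mp hB'
      exact map_subset_map.mpr (subset_univ B)
    · rintro B' hB'
      obtain ⟨B, hB, rfl⟩ := mem_image.mp hB'
      exact (h1 B hB).map
    · rintro A' hA' B' hB' hne
      obtain ⟨A, hA, rfl⟩ := mem_image.mp hA'
      obtain ⟨B, hB, rfl⟩ := mem_image.mp hB'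
      have hAB : A ≠ B := fun h => hne (by rw [h])
      rw [Finset.disjoint_map]
      exact h2 A hA B hB hAB
  · intro P1 h1 P2 h2 hEq
    exact Finset.image_injective (Finset.map_injective e) hEq
  · intro Q hQ
    obtain ⟨hsub, h1, h2⟩ := mem_partialparts.mp hQ
    have hrange : ∀ B ∈ Q, ∀ x ∈ B, x ∈ Set.range e := by
      intro B hB x hx
      obtain ⟨y, _, hy⟩ := mem_map.mp (hsub B hB hx)
      exact ⟨y, hy⟩
    have hmp : ∀ B ∈ Q, (B.preimage e e.injective.injOn).map e = B := by
      intro B hB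
      rw [map_eq_image, image_preimage]
      exact (filter_eq_self).mpr (hrange B hB)
    refine ⟨Q.image (fun B => B.preimage e e.injective.injOn),
      mem_partialparts.mpr ⟨?_, ?_, ?_⟩, ?_⟩
    · exact fun B _ => subset_univ B
    · rintro B' hB'
      obtain ⟨B, hB, rfl⟩ := mem_image.mp hB'
      have hne := h1 B hB
      rw [← hmp B hB] at hne
      exact map_nonempty.mp hne
    · rintro A' hA' B' hB' hne
      obtain ⟨A, hA, rfl⟩ := mem_image.mp hA'
      obtain ⟨B, hB, rfl⟩ := mem_image.mp hB'
      have hAB : A ≠ B := fun h => hne (by rw [h])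
      rw [Finset.disjoint_left]
      intro x hx hx'
      rw [mem_preimage] at hx hx'
      exact (Finset.disjoint_left.mp (h2 A hA B hB hAB)) hx hx'
    · rw [image_image]
      refine (Finset.image_congr ?_).trans image_id
      intro B hB
      exact hmp B hB

/-- The number of 3-nilpotent semigroups of rank `r` up to presentation, i.e.
the number of partial partitions of `X × X` (`|X| = r`) with at least one
block, equals `B_{r²+1} − 1`. -/
theorem stmt17 (r : ℕ) (hr : 0 < r) :
    Nat.card {P : Finset (Finset (Fin r × Fin r)) //
      P.Nonempty ∧ (∀ B ∈ P, B.Nonempty) ∧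
      ∀ A ∈ P, ∀ B ∈ P, A ≠ B → Disjoint A B} = bell (r ^ 2 + 1) - 1 := by
  classical
  have hcard : Fintype.card (Fin r × Fin r) = r ^ 2 := by
    simp [pow_two]
  let e : (Fin r × Fin r) ↪ Fin (r ^ 2 + 1) :=
    ((finProdFinEquiv.trans (finCongr (pow_two r).symm)).toEmbedding).trans
      (Fin.castSuccEmb)
  set s : Finset (Fin (r ^ 2 + 1)) := (univ : Finset (Fin r × Fin r)).map e with hs
  have ha : Fin.last (r ^ 2) ∉ s := by
    intro h
    obtain ⟨x, -, hx⟩ := mem_map.mp h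
    exact (Fin.castSucc_lt_last _).ne hx
  have key := partialparts_card_eq ha
  have h2 := fullparts_card (insert (Fin.last (r ^ 2)) s)
  have hcards : (insert (Fin.last (r ^ 2)) s).card = r ^ 2 + 1 := by
    rw [card_insert_of_notMem ha, hs, card_map, card_univ, hcard]
  have h3 := partialparts_map_card e
  have hsplit : partialparts (univ : Finset (Fin r × Fin r))
      = insert ∅ ((univ : Finset (Finset (Finset (Fin r × Fin r)))).filter
        (fun P => P.Nonempty ∧ (∀ B ∈ P, B.Nonempty) ∧
          ∀ A ∈ P, ∀ B ∈ P, A ≠ B → Disjoint A B)) := by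
    ext P
    rw [mem_partialparts, mem_insert, mem_filter]
    constructor
    · rintro ⟨-, h1', h2'⟩
      rcases eq_or_ne P ∅ with rfl | hne
      · exact Or.inl rfl
      · exact Or.inr ⟨mem_univ P, nonempty_iff_ne_empty.mpr hne, h1', h2'⟩
    · rintro (rfl | ⟨-, -, h1', h2'⟩)
      · refine ⟨?_, ?_, ?_⟩ <;> simp
      · exact ⟨fun B _ => subset_univ B, h1', h2'⟩
  have hnm : (∅ : Finset (Finset (Fin r × Fin r))) ∉
      ((univ : Finset (Finset (Finset (Fin r × Fin r)))).filter
        (fun P => P.Nonempty ∧ (∀ B ∈ P, B.Nonempty) ∧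
          ∀ A ∈ P, ∀ B ∈ P, A ≠ B → Disjoint A B)) := by
    simp [Finset.not_nonempty_empty]
  have hcount : (partialparts (univ : Finset (Fin r × Fin r))).card
      = ((univ : Finset (Finset (Finset (Fin r × Fin r)))).filter
        (fun P => P.Nonempty ∧ (∀ B ∈ P, B.Nonempty) ∧
          ∀ A ∈ P, ∀ B ∈ P, A ≠ B → Disjoint A B)).card + 1 := by
    rw [hsplit, card_insert_of_notMem hnm]
  rw [Nat.card_eq_fintype_card, Fintype.card_subtype]
  rw [hcards] at h2
  rw [← hs] at h3
  rw [← h3, key, h2] at hcount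
  omega
end
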